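/- arXiv:1807.08078 — 6 statements merged into one kernel-verified Lean document; each statement's English description precedes it below -/
import Mathlib

section
/- Let G=(V,E) be a general dissimilarity graph and let S⊆E be a non-top cover of all unbalanced cycles of G. Then G can be converted into a general metric graph by only increasing weights of edges in S: there exists a weight function w' on E with w'(e)≥w(e) for every e∈E and w'(e)=w(e) for every e∉S, such that (G,w') is a general metric graph. -/
open SimpleGraph

noncomputable section

variable {V : Type*}

/-- The length of a walk: the sum of the weights of its edges. -/
def wlen {G : SimpleGraph V} (w : Sym2 V → ℝ) {u v : V} (p : G.Walk u v) : ℝ :=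
  (p.edges.map w).sum

/-- The shortest-path distance between two vertices: the minimum length of a path. -/
def spDist (G : SimpleGraph V) (w : Sym2 V → ℝ) (u v : V) : ℝ :=
  sInf {x : ℝ | ∃ p : G.Walk u v, p.IsPath ∧ wlen w p = x}

/-- `(G, w)` is a general metric graph: the weight of every edge equals the
shortest-path distance between its endpoints. -/
def IsMetricGraph (G : SimpleGraph V) (w : Sym2 V → ℝ) : Prop :=
  ∀ u v : V, G.Adj u v → w s(u, v) = spDist G w u v

/-- `e` is a top edge of the closed walk `p`: it lies on `p` and its weight strictly
exceeds the sum of the weights of all the other edges of `p`. -/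
def IsTopEdge {G : SimpleGraph V} (w : Sym2 V → ℝ) {v : V} (p : G.Walk v v)
    (e : Sym2 V) : Prop :=
  e ∈ p.edges ∧ (p.edges.map w).sum - w e < w e

/-- A cycle is unbalanced if it has a top edge. -/
def IsUnbalanced {G : SimpleGraph V} (w : Sym2 V → ℝ) {v : V} (p : G.Walk v v) : Prop :=
  ∃ e, IsTopEdge w p e

/-- `S` is a regular cover of all unbalanced cycles of `G`:
it contains at least one edge of every unbalanced cycle. -/
def RegularCover (G : SimpleGraph V) (w : Sym2 V → ℝ) (S : Set (Sym2 V)) : Prop :=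
  ∀ (v : V) (p : G.Walk v v), p.IsCycle → IsUnbalanced w p → ∃ e ∈ p.edges, e ∈ S

/-- `S` is a non-top cover of all unbalanced cycles of `G`:
it contains at least one non-top edge of every unbalanced cycle. -/
def NonTopCover (G : SimpleGraph V) (w : Sym2 V → ℝ) (S : Set (Sym2 V)) : Prop :=
  ∀ (v : V) (p : G.Walk v v), p.IsCycle → IsUnbalanced w p →
    ∃ e ∈ p.edges, e ∈ S ∧ ¬ IsTopEdge w p e

/-!
Give every edge of `S` a weight at least that of any edge of `G`, and let `D` be the shortest-path
distance for these new weights. Every edge `uv` satisfies `w(uv) ≤ D(u, v)`: a `u`–`v` path meeting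
`S` is heavy enough, and a `u`–`v` path `p` avoiding both `S` and `uv` closes up with `uv` to a
cycle whose only possible edge in `S` is `uv`; were `uv` its top edge, the cover would supply a
non-top edge in `S`, so `w(uv) ≤ w(p)`. The edge itself gives `D(u, v) ≤ w(uv)` when `uv ∉ S`.
Hence `w' := D` on edges only raises weights on `S`, and it is a metric graph because `D`
satisfies the triangle inequality.
-/

variable {G : SimpleGraph V} {w : Sym2 V → ℝ}

section ShortestPaths

lemma wlen_cons {u x v : V} (h : G.Adj u x) (p : G.Walk x v) :
    wlen w (Walk.cons h p) = w s(u, x) + wlen w p := by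
  simp [wlen]

lemma wlen_append {u x v : V} (p : G.Walk u x) (q : G.Walk x v) :
    wlen w (p.append q) = wlen w p + wlen w q := by
  simp [wlen]

lemma wlen_reverse {u v : V} (p : G.Walk u v) : wlen w p.reverse = wlen w p := by
  simp [wlen, List.sum_reverse]

lemma wlen_le_of_edges_sublist (hw : ∀ e ∈ G.edgeSet, 0 ≤ w e) {u v u' v' : V}
    {p : G.Walk u v} {q : G.Walk u' v'} (h : p.edges.Sublist q.edges) : wlen w p ≤ wlen w q :=
  (h.map w).sum_le_sum fun x hx ↦ by
    obtain ⟨e, he, rfl⟩ := List.mem_map.1 hx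
    exact hw e (q.edges_subset_edgeSet he)

lemma wlen_nonneg (hw : ∀ e ∈ G.edgeSet, 0 ≤ w e) {u v : V} (p : G.Walk u v) :
    0 ≤ wlen w p :=
  wlen_le_of_edges_sublist (p := (Walk.nil : G.Walk u u)) hw (List.nil_sublist _)

lemma spDist_le_wlen_of_isPath (hw : ∀ e ∈ G.edgeSet, 0 ≤ w e) {u v : V} {p : G.Walk u v}
    (hp : p.IsPath) : spDist G w u v ≤ wlen w p :=
  csInf_le ⟨0, by rintro x ⟨q, -, rfl⟩; exact wlen_nonneg hw q⟩ ⟨p, hp, rfl⟩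

lemma le_spDist {u v : V} (huv : G.Reachable u v) {c : ℝ}
    (h : ∀ p : G.Walk u v, p.IsPath → c ≤ wlen w p) : c ≤ spDist G w u v := by
  classical
  obtain ⟨q⟩ := huv
  exact le_csInf ⟨_, q.bypass, q.bypass_isPath, rfl⟩ (by rintro x ⟨p, hp, rfl⟩; exact h p hp)

lemma spDist_le_wlen (hw : ∀ e ∈ G.edgeSet, 0 ≤ w e) {u v : V} (p : G.Walk u v) :
    spDist G w u v ≤ wlen w p := by
  classical
  exact (spDist_le_wlen_of_isPath hw p.bypass_isPath).trans
    (wlen_le_of_edges_sublist hw p.edges_bypass_sublist_edges)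

lemma spDist_le_weight (hw : ∀ e ∈ G.edgeSet, 0 ≤ w e) {u v : V} (h : G.Adj u v) :
    spDist G w u v ≤ w s(u, v) := by
  simpa [wlen] using spDist_le_wlen hw (Walk.cons h Walk.nil)

lemma spDist_comm (G : SimpleGraph V) (w : Sym2 V → ℝ) (u v : V) :
    spDist G w u v = spDist G w v u := by
  have key : ∀ a b, {x : ℝ | ∃ p : G.Walk a b, p.IsPath ∧ wlen w p = x} ⊆
      {x | ∃ p : G.Walk b a, p.IsPath ∧ wlen w p = x} := by
    rintro a b x ⟨p, hp, rfl⟩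
    exact ⟨p.reverse, hp.reverse, wlen_reverse p⟩
  exact congrArg sInf ((key u v).antisymm (key v u))

lemma spDist_triangle (hw : ∀ e ∈ G.edgeSet, 0 ≤ w e) {a x b : V} (hax : G.Reachable a x)
    (hxb : G.Reachable x b) : spDist G w a b ≤ spDist G w a x + spDist G w x b := by
  suffices spDist G w a b - spDist G w x b ≤ spDist G w a x by linarith
  refine le_spDist hax fun r _ ↦ ?_
  suffices spDist G w a b - wlen w r ≤ spDist G w x b by linarith
  refine le_spDist hxb fun s _ ↦ ?_
  linarith [spDist_le_wlen hw (r.append s), wlen_append (w := w) r s]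

def edgeDist (G : SimpleGraph V) (w : Sym2 V → ℝ) : Sym2 V → ℝ :=
  Sym2.lift ⟨spDist G w, spDist_comm G w⟩

@[simp]
lemma edgeDist_mk (u v : V) : edgeDist G w s(u, v) = spDist G w u v := rfl

lemma spDist_le_wlen_edgeDist (hw : ∀ e ∈ G.edgeSet, 0 ≤ w e) {u v : V} (p : G.Walk u v) :
    spDist G w u v ≤ wlen (edgeDist G w) p := by
  induction p with
  | nil => simpa [wlen] using spDist_le_wlen hw (Walk.nil : G.Walk _ _)
  | cons h q ih =>
    rw [wlen_cons, edgeDist_mk]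
    linarith [spDist_triangle hw h.reachable q.reachable]

lemma isMetricGraph_edgeDist (hw : ∀ e ∈ G.edgeSet, 0 ≤ w e) :
    IsMetricGraph G (edgeDist G w) := by
  have hw' : ∀ e ∈ G.edgeSet, 0 ≤ edgeDist G w e := by
    intro e he
    induction e using Sym2.ind with
    | _ u v => exact le_spDist (G.mem_edgeSet.1 he).reachable fun p _ ↦ wlen_nonneg hw p
  intro u v h
  refine le_antisymm ?_ (spDist_le_weight hw' h)
  exact le_spDist h.reachable fun p _ ↦ spDist_le_wlen_edgeDist hw p

end ShortestPaths

section NonTopCover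

lemma NonTopCover.weight_le_wlen {S : Set (Sym2 V)} (hS : NonTopCover G w S) {u v : V}
    (h : G.Adj u v) {p : G.Walk u v} (hp : p.IsPath) (huv : s(u, v) ∉ p.edges)
    (hpS : ∀ f ∈ p.edges, f ∉ S) : w s(u, v) ≤ wlen w p := by
  by_contra! hlt
  set c := Walk.cons h.symm p
  have hc : c.IsCycle := (Walk.cons_isCycle_iff p h.symm).2 ⟨hp, by rwa [Sym2.eq_swap]⟩
  have htop : IsTopEdge w c s(v, u) := by
    refine ⟨by simp [c], ?_⟩
    have : (c.edges.map w).sum = w s(v, u) + wlen w p := by simp [c, wlen]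
    rw [this, Sym2.eq_swap]
    linarith
  obtain ⟨f, hf, hfS, hf_top⟩ := hS v c hc ⟨_, htop⟩
  rcases List.mem_cons.1 hf with rfl | hf
  · exact hf_top htop
  · exact hpS f hf hfS

open Classical in
def raiseOn (S : Set (Sym2 V)) (Ω : ℝ) (w : Sym2 V → ℝ) : Sym2 V → ℝ :=
  fun e ↦ if e ∈ S then Ω else w e

variable {S : Set (Sym2 V)} {Ω : ℝ}

lemma raiseOn_of_mem {e : Sym2 V} (he : e ∈ S) : raiseOn S Ω w e = Ω := if_pos he

lemma raiseOn_of_notMem {e : Sym2 V} (he : e ∉ S) : raiseOn S Ω w e = w e := if_neg he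

variable (hw : ∀ e ∈ G.edgeSet, 0 ≤ w e) (hΩ : ∀ e ∈ G.edgeSet, w e ≤ Ω)
include hw hΩ

lemma raiseOn_nonneg : ∀ e ∈ G.edgeSet, 0 ≤ raiseOn S Ω w e := by
  intro e he
  by_cases hs : e ∈ S
  · rw [raiseOn_of_mem hs]; exact (hw e he).trans (hΩ e he)
  · rw [raiseOn_of_notMem hs]; exact hw e he

lemma NonTopCover.weight_le_wlen_raiseOn (hS : NonTopCover G w S) {u v : V} (h : G.Adj u v)
    {p : G.Walk u v} (hp : p.IsPath) : w s(u, v) ≤ wlen (raiseOn S Ω w) p := by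
  have single_le : ∀ {f}, f ∈ p.edges → raiseOn S Ω w f ≤ wlen (raiseOn S Ω w) p :=
    fun hf ↦ List.single_le_sum (fun _ hx ↦ by
      obtain ⟨e, he, rfl⟩ := List.mem_map.1 hx
      exact raiseOn_nonneg hw hΩ e (p.edges_subset_edgeSet he)) _ (List.mem_map_of_mem hf)
  by_cases hmeet : ∃ f ∈ p.edges, f ∈ S
  · obtain ⟨f, hf, hfS⟩ := hmeet
    have := single_le hf
    rw [raiseOn_of_mem hfS] at this
    exact (hΩ _ h).trans this
  push Not at hmeet
  by_cases huv : s(u, v) ∈ p.edges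
  · simpa [raiseOn_of_notMem (hmeet _ huv)] using single_le huv
  have : wlen (raiseOn S Ω w) p = wlen w p :=
    congrArg List.sum (List.map_congr_left fun f hf ↦ raiseOn_of_notMem (hmeet f hf))
  exact this ▸ hS.weight_le_wlen h hp huv hmeet

lemma NonTopCover.weight_le_edgeDist_raiseOn (hS : NonTopCover G w S) :
    ∀ e ∈ G.edgeSet, w e ≤ edgeDist G (raiseOn S Ω w) e := by
  intro e he
  induction e using Sym2.ind with
  | _ u v =>
    have h := G.mem_edgeSet.1 he
    exact le_spDist h.reachable fun p hp ↦ hS.weight_le_wlen_raiseOn hw hΩ h hp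

lemma NonTopCover.edgeDist_raiseOn_of_notMem (hS : NonTopCover G w S) :
    ∀ e ∈ G.edgeSet, e ∉ S → edgeDist G (raiseOn S Ω w) e = w e := by
  intro e he hs
  refine le_antisymm ?_ (hS.weight_le_edgeDist_raiseOn hw hΩ e he)
  induction e using Sym2.ind with
  | _ u v =>
    rw [← raiseOn_of_notMem (w := w) (Ω := Ω) hs]
    exact spDist_le_weight (raiseOn_nonneg hw hΩ) (G.mem_edgeSet.1 he)

end NonTopCover

theorem stmt1_general [Fintype V] (G : SimpleGraph V)
    (w : Sym2 V → ℝ) (hw : ∀ e ∈ G.edgeSet, 0 < w e)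
    (S : Set (Sym2 V)) (hS : NonTopCover G w S) :
    ∃ w' : Sym2 V → ℝ,
      (∀ e ∈ G.edgeSet, w e ≤ w' e) ∧
      (∀ e ∈ G.edgeSet, e ∉ S → w' e = w e) ∧
      IsMetricGraph G w' := by
  have hw₀ : ∀ e ∈ G.edgeSet, 0 ≤ w e := fun e he ↦ (hw e he).le
  obtain ⟨Ω, hΩ⟩ := Finite.exists_le w
  have hΩ' : ∀ e ∈ G.edgeSet, w e ≤ Ω := fun e _ ↦ hΩ e
  exact ⟨edgeDist G (raiseOn S Ω w), hS.weight_le_edgeDist_raiseOn hw₀ hΩ',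
    hS.edgeDist_raiseOn_of_notMem hw₀ hΩ', isMetricGraph_edgeDist (raiseOn_nonneg hw₀ hΩ')⟩

/-- If `S ⊆ E` is a non-top cover of all unbalanced cycles of a general
dissimilarity graph `G`, then `G` can be converted into a general metric graph
by only increasing weights of edges in `S`. -/
theorem stmt1 [Fintype V] (G : SimpleGraph V) (hconn : G.Connected)
    (w : Sym2 V → ℝ) (hw : ∀ e ∈ G.edgeSet, 0 < w e)
    (S : Set (Sym2 V)) (hSE : S ⊆ G.edgeSet) (hS : NonTopCover G w S) :
    ∃ w' : Sym2 V → ℝ,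
      (∀ e ∈ G.edgeSet, w e ≤ w' e) ∧
      (∀ e ∈ G.edgeSet, e ∉ S → w' e = w e) ∧
      IsMetricGraph G w' :=
  stmt1_general G w hw S hS
end
end

section
/- Let G=(V,E) be a general dissimilarity graph, and suppose the weights of the edges in a set S⊆E can be modified (to arbitrary nonnegative values) so that G becomes a general metric graph. Then S is a regular cover of all unbalanced cycles of G, i.e., S contains at least one edge of every unbalanced cycle. Combined with sufficiency, S⊆E is a valid solution to the Generalized Metric Violation Distance problem (its weights can be modified to convert G into a general metric graph) if and only if S is a regular cover of all unbalanced cycles of G. -/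
open SimpleGraph

noncomputable section

variable {V : Type*}

/-!
If `w'` is metric and agrees with `w` along a closed walk, a top edge `ab` of the walk would be
heavier than the rest of the walk, a walk from `a` to `b`, against `w' ab = d'(a, b)`.

Conversely, raise every edge of `S` to an upper bound `M` of all the weights and let `w'` be the
shortest-path distance of the raised weights; shortest-path distances always form a metric graph.
An edge `ab ∉ S` keeps its weight: an `a`–`b` path shorter than `w ab` avoids `ab` and, since
each edge of `S` now costs `M ≥ w ab`, every edge of `S`, so together with `ab` it is an
unbalanced cycle missed by `S`.
-/

namespace SimpleGraph

variable {G : SimpleGraph V} {f g w : Sym2 V → ℝ}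

section WalkLength

@[simp]
lemma wlen_nil {u : V} : wlen f (Walk.nil : G.Walk u u) = 0 := rfl

@[simp]
lemma wlen_cons {u x v : V} (h : G.Adj u x) (p : G.Walk x v) :
    wlen f (Walk.cons h p) = f s(u, x) + wlen f p := by
  simp [wlen]

@[simp]
lemma wlen_append {u x v : V} (p : G.Walk u x) (q : G.Walk x v) :
    wlen f (p.append q) = wlen f p + wlen f q := by
  simp [wlen, Walk.edges_append]

@[simp]
lemma wlen_reverse {u v : V} (p : G.Walk u v) : wlen f p.reverse = wlen f p := by
  simp [wlen, Walk.edges_reverse, List.sum_reverse]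

lemma wlen_le_wlen {u v : V} (p : G.Walk u v) (hfg : ∀ e ∈ p.edges, f e ≤ g e) :
    wlen f p ≤ wlen g p :=
  List.sum_le_sum hfg

lemma wlen_congr {u v : V} (p : G.Walk u v) (hfg : ∀ e ∈ p.edges, f e = g e) :
    wlen f p = wlen g p :=
  congrArg List.sum (List.map_congr_left hfg)

lemma forall_mem_map_edges_nonneg (hf : ∀ e ∈ G.edgeSet, 0 ≤ f e) {u v : V} (p : G.Walk u v) :
    ∀ x ∈ p.edges.map f, 0 ≤ x := by
  simp only [List.mem_map, forall_exists_index, and_imp, forall_apply_eq_imp_iff₂]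
  exact fun e he => hf e (p.edges_subset_edgeSet he)

lemma wlen_nonneg (hf : ∀ e ∈ G.edgeSet, 0 ≤ f e) {u v : V} (p : G.Walk u v) : 0 ≤ wlen f p :=
  List.sum_nonneg (forall_mem_map_edges_nonneg hf p)

lemma le_wlen_of_mem_edges (hf : ∀ e ∈ G.edgeSet, 0 ≤ f e) {u v : V} {p : G.Walk u v}
    {e : Sym2 V} (he : e ∈ p.edges) : f e ≤ wlen f p :=
  List.single_le_sum (forall_mem_map_edges_nonneg hf p) _ (List.mem_map_of_mem he)

lemma wlen_bypass_le [DecidableEq V] (hf : ∀ e ∈ G.edgeSet, 0 ≤ f e) {u v : V}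
    (p : G.Walk u v) : wlen f p.bypass ≤ wlen f p :=
  (p.edges_bypass_sublist_edges.map f).sum_le_sum (forall_mem_map_edges_nonneg hf p)

lemma exists_walk_wlen_eq_add_of_mem_edges {v a b : V} {p : G.Walk v v}
    (hab : s(a, b) ∈ p.edges) : ∃ r : G.Walk a b, wlen f p = f s(a, b) + wlen f r := by
  rcases (Walk.isSubwalk_toWalk_iff_mem_edges (p.adj_of_mem_edges hab)).2 hab with
    ⟨ru, rv, hp⟩ | ⟨ru, rv, hp⟩ <;> rw [hp]
  · exact ⟨(rv.append ru).reverse, by simp [SimpleGraph.Adj.toWalk]; ring⟩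
  · exact ⟨rv.append ru, by simp [SimpleGraph.Adj.toWalk, Sym2.eq_swap]; ring⟩

end WalkLength

section ShortestPath

lemma spDist_le_wlen (hf : ∀ e ∈ G.edgeSet, 0 ≤ f e) {u v : V} (p : G.Walk u v) :
    spDist G f u v ≤ wlen f p := by
  classical
  unfold spDist
  refine le_trans (csInf_le ?_ ⟨p.bypass, p.bypass_isPath, rfl⟩) (wlen_bypass_le hf p)
  exact ⟨0, fun _ ⟨q, _, hq⟩ => hq ▸ wlen_nonneg hf q⟩

lemma le_spDist (hconn : G.Connected) {u v : V} {c : ℝ}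
    (h : ∀ p : G.Walk u v, p.IsPath → c ≤ wlen f p) : c ≤ spDist G f u v := by
  classical
  obtain ⟨q⟩ := hconn u v
  unfold spDist
  exact le_csInf ⟨_, q.bypass, q.bypass_isPath, rfl⟩ fun _ ⟨p, hp, hx⟩ => hx ▸ h p hp

lemma spDist_nonneg (hf : ∀ e ∈ G.edgeSet, 0 ≤ f e) (u v : V) : 0 ≤ spDist G f u v :=
  Real.sInf_nonneg fun _ ⟨p, _, hx⟩ => hx ▸ wlen_nonneg hf p

lemma spDist_comm (u v : V) : spDist G f u v = spDist G f v u := by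
  unfold spDist
  congr 1
  ext x
  constructor <;> rintro ⟨p, hp, rfl⟩ <;> exact ⟨p.reverse, hp.reverse, wlen_reverse p⟩

lemma spDist_le_of_adj (hf : ∀ e ∈ G.edgeSet, 0 ≤ f e) {u v : V} (h : G.Adj u v) :
    spDist G f u v ≤ f s(u, v) := by
  simpa using spDist_le_wlen hf h.toWalk

lemma spDist_triangle (hconn : G.Connected) (hf : ∀ e ∈ G.edgeSet, 0 ≤ f e) (u x v : V) :
    spDist G f u v ≤ spDist G f u x + spDist G f x v := by
  suffices spDist G f u v - spDist G f x v ≤ spDist G f u x by linarith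
  refine le_spDist hconn fun p _ => ?_
  suffices spDist G f u v - wlen f p ≤ spDist G f x v by linarith
  refine le_spDist hconn fun q _ => ?_
  have := spDist_le_wlen hf (p.append q)
  simp only [wlen_append] at this
  linarith

def spDistWeight (G : SimpleGraph V) (f : Sym2 V → ℝ) : Sym2 V → ℝ :=
  Sym2.lift ⟨spDist G f, spDist_comm⟩

@[simp]
lemma spDistWeight_mk (u v : V) : spDistWeight G f s(u, v) = spDist G f u v := rfl

lemma spDistWeight_nonneg (hf : ∀ e ∈ G.edgeSet, 0 ≤ f e) (e : Sym2 V) :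
    0 ≤ spDistWeight G f e := by
  induction e using Sym2.ind with
  | _ u v => exact spDist_nonneg hf u v

lemma spDist_le_wlen_spDistWeight (hconn : G.Connected) (hf : ∀ e ∈ G.edgeSet, 0 ≤ f e)
    {u v : V} (p : G.Walk u v) : spDist G f u v ≤ wlen (spDistWeight G f) p := by
  induction p with
  | nil => simpa using spDist_le_wlen hf (Walk.nil : G.Walk _ _)
  | cons h p ih =>
    rw [wlen_cons, spDistWeight_mk]
    exact (spDist_triangle hconn hf _ _ _).trans (by linarith)

theorem isMetricGraph_spDistWeight (hconn : G.Connected) (hf : ∀ e ∈ G.edgeSet, 0 ≤ f e) :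
    IsMetricGraph G (spDistWeight G f) := fun u v h =>
  le_antisymm
    (le_spDist hconn fun p _ => by simpa using spDist_le_wlen_spDistWeight hconn hf p)
    (spDist_le_of_adj (fun e _ => spDistWeight_nonneg hf e) h)

end ShortestPath

section TopEdge

lemma IsTopEdge.congr {v : V} {p : G.Walk v v} {e : Sym2 V} (h : IsTopEdge g p e)
    (hfg : ∀ x ∈ p.edges, f x = g x) : IsTopEdge f p e := by
  have hsum : (p.edges.map f).sum = (p.edges.map g).sum := wlen_congr p hfg
  exact ⟨h.1, by rw [hsum, hfg e h.1]; exact h.2⟩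

lemma isTopEdge_cons {u v : V} (h : G.Adj u v) {p : G.Walk v u} (hp : wlen f p < f s(u, v)) :
    IsTopEdge f (Walk.cons h p) s(u, v) :=
  ⟨by simp, by simpa [wlen] using hp⟩

theorem IsMetricGraph.not_isTopEdge (hf : ∀ e ∈ G.edgeSet, 0 ≤ f e) (hm : IsMetricGraph G f)
    {v : V} (p : G.Walk v v) (e : Sym2 V) : ¬ IsTopEdge f p e := by
  induction e using Sym2.ind with
  | _ a b =>
  rintro ⟨he, htop⟩
  obtain ⟨r, hr⟩ := exists_walk_wlen_eq_add_of_mem_edges (f := f) he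
  have hmr : f s(a, b) ≤ wlen f r := hm a b (p.adj_of_mem_edges he) ▸ spDist_le_wlen hf r
  change wlen f p - f s(a, b) < f s(a, b) at htop
  linarith

end TopEdge

theorem regularCover_of_isMetricGraph {S : Set (Sym2 V)} {w' : Sym2 V → ℝ}
    (hw' : ∀ e ∈ G.edgeSet, 0 ≤ w' e) (hw'w : ∀ e ∈ G.edgeSet, e ∉ S → w' e = w e)
    (hm : IsMetricGraph G w') : RegularCover G w S := by
  rintro v p - ⟨e, he⟩
  by_contra! hS
  exact hm.not_isTopEdge hw' p e
    (he.congr fun x hx => hw'w x (p.edges_subset_edgeSet hx) (hS x hx))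

lemma spDist_eq_of_regularCover (hconn : G.Connected) {S : Set (Sym2 V)}
    (hRC : RegularCover G w S) (hg : ∀ e ∈ G.edgeSet, 0 ≤ g e)
    (hgw : ∀ e ∈ G.edgeSet, e ∉ S → g e = w e) (hgS : ∀ e ∈ S, ∀ e' ∈ G.edgeSet, w e' ≤ g e)
    {a b : V} (hab : G.Adj a b) (habS : s(a, b) ∉ S) : spDist G g a b = w s(a, b) := by
  have hgab : g s(a, b) = w s(a, b) := hgw _ hab habS
  refine le_antisymm (hgab ▸ spDist_le_of_adj hg hab) (le_spDist hconn fun p hp => ?_)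
  by_contra! hlt
  have hab_notMem : s(a, b) ∉ p.edges := fun h => by
    linarith [le_wlen_of_mem_edges hg h]
  have hwg : wlen w p ≤ wlen g p := wlen_le_wlen p fun e he => by
    by_cases heS : e ∈ S
    · exact hgS e heS e (p.edges_subset_edgeSet he)
    · exact (hgw e (p.edges_subset_edgeSet he) heS).ge
  have hcyc : (Walk.cons hab.symm p).IsCycle :=
    (Walk.cons_isCycle_iff p hab.symm).2 ⟨hp, by rwa [Sym2.eq_swap]⟩
  have htop : IsTopEdge w (Walk.cons hab.symm p) s(b, a) :=
    isTopEdge_cons hab.symm (by rw [Sym2.eq_swap]; linarith)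
  obtain ⟨e, he, heS⟩ := hRC b _ hcyc ⟨_, htop⟩
  rw [Walk.edges_cons, List.mem_cons] at he
  rcases he with rfl | he
  · exact habS (Sym2.eq_swap ▸ heS)
  · linarith [le_wlen_of_mem_edges hg he, hgS e heS _ (G.mem_edgeSet.2 hab)]

theorem RegularCover.exists_isMetricGraph (hconn : G.Connected) (hw : ∀ e ∈ G.edgeSet, 0 ≤ w e)
    (hbdd : BddAbove (w '' G.edgeSet)) {S : Set (Sym2 V)} (hRC : RegularCover G w S) :
    ∃ w' : Sym2 V → ℝ, (∀ e ∈ G.edgeSet, 0 ≤ w' e) ∧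
      (∀ e ∈ G.edgeSet, e ∉ S → w' e = w e) ∧ IsMetricGraph G w' := by
  classical
  obtain ⟨M, hM⟩ := hbdd
  have hwM : ∀ e ∈ G.edgeSet, w e ≤ M := fun e he => hM ⟨e, he, rfl⟩
  set g := S.piecewise (fun _ => M) w
  have hg : ∀ e ∈ G.edgeSet, 0 ≤ g e := fun e he => by
    by_cases heS : e ∈ S
    · simpa [g, heS] using (hw e he).trans (hwM e he)
    · simpa [g, heS] using hw e he
  have hgw : ∀ e ∈ G.edgeSet, e ∉ S → g e = w e := fun e _ heS => by simp [g, heS]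
  have hgS : ∀ e ∈ S, ∀ e' ∈ G.edgeSet, w e' ≤ g e := fun e heS e' he' => by
    simpa [g, heS] using hwM e' he'
  refine ⟨spDistWeight G g, fun e _ => spDistWeight_nonneg hg e, fun e he heS => ?_,
    isMetricGraph_spDistWeight hconn hg⟩
  induction e using Sym2.ind with
  | _ a b => exact spDist_eq_of_regularCover hconn hRC hg hgw hgS he heS

end SimpleGraph

theorem stmt4_general [Fintype V] (G : SimpleGraph V) (hconn : G.Connected)
    (w : Sym2 V → ℝ) (hw : ∀ e ∈ G.edgeSet, 0 < w e)
    (S : Set (Sym2 V)) :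
    (∃ w' : Sym2 V → ℝ,
      (∀ e ∈ G.edgeSet, 0 ≤ w' e) ∧
      (∀ e ∈ G.edgeSet, e ∉ S → w' e = w e) ∧
      IsMetricGraph G w') ↔ RegularCover G w S :=
  ⟨fun ⟨_, hw', hw'w, hm⟩ => regularCover_of_isMetricGraph hw' hw'w hm,
    fun hRC => hRC.exists_isMetricGraph hconn (fun e he => (hw e he).le)
      (G.edgeSet.toFinite.image w).bddAbove⟩

/-- `S ⊆ E` is a valid solution to the Generalized Metric Violation Distance
problem (its weights can be modified, to arbitrary nonnegative values, so that
`G` becomes a general metric graph) if and only if `S` is a regular cover of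
all unbalanced cycles of `G`. -/
theorem stmt4 [Fintype V] (G : SimpleGraph V) (hconn : G.Connected)
    (w : Sym2 V → ℝ) (hw : ∀ e ∈ G.edgeSet, 0 < w e)
    (S : Set (Sym2 V)) (hSE : S ⊆ G.edgeSet) :
    (∃ w' : Sym2 V → ℝ,
      (∀ e ∈ G.edgeSet, 0 ≤ w' e) ∧
      (∀ e ∈ G.edgeSet, e ∉ S → w' e = w e) ∧
      IsMetricGraph G w') ↔ RegularCover G w S :=
  stmt4_general G hconn w hw S
end
end

section
/- Let G=(V,E) be an undirected unweighted graph on n=|V| vertices with demand pairs {(sᵢ,tᵢ)}ᵢ₌₁ᵏ such that (sᵢ,tᵢ)∉E for all i. Let G'=(V,E') be the weighted graph with E'=E∪{(sᵢ,tᵢ)}ᵢ₌₁ᵏ, where every edge of E has weight 1 and every edge (sᵢ,tᵢ) has weight n. Then a set M⊆E is a non-top cover of all unbalanced cycles of G' if and only if in the subgraph (V, E∖M) every sᵢ is disconnected from its corresponding tᵢ. Consequently, the minimum size of a multicut of G for the given demand pairs equals the minimum size of a non-top cover of all unbalanced cycles of G'. -/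
/-!
Closing an `sᵢ`–`tᵢ` path of `G` (fewer than `n` edges of weight 1) by the demand edge of
weight `n` gives an unbalanced cycle whose only top edge is the demand edge, so a non-top cover
hits every such path. Conversely, the top edge of an unbalanced cycle of `G'` outweighs the other
edges together, of which there are at least two, each of weight at least 1; hence it is a demand
edge, every other edge lies in `G`, and these form an `sᵢ`–`tᵢ` path, which a multicut hits.
A non-top cover restricted to `E` is still a multicut, so the two minima agree.
-/

open SimpleGraph

noncomputable section

variable {V : Type*}

theorem SimpleGraph.Walk.IsCycle.reachable_of_forall_ne_mem_edgeSet {G H : SimpleGraph V}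
    {x u v : V} {c : G.Walk x x} (hc : c.IsCycle) (huv : s(u, v) ∈ c.edges)
    (hH : ∀ f ∈ c.edges, f ≠ s(u, v) → f ∈ H.edgeSet) : H.Reachable u v := by
  set K := H ⊔ fromEdgeSet {s(u, v)}
  have hK : ∀ f ∈ c.edges, f ∈ K.edgeSet := by
    intro f hf
    by_cases hfe : f = s(u, v)
    · subst hfe
      simpa [K] using Or.inr (c.adj_of_mem_edges huv).ne
    · simpa [K] using Or.inl (hH f hf hfe)
  obtain ⟨-, hreach⟩ := adj_and_reachable_delete_edges_iff_exists_cycle.mpr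
    ⟨x, c.transfer K hK, hc.transfer hK, by simpa using huv⟩
  refine hreach.mono fun a b hab => ?_
  simp only [K, deleteEdges_adj, sup_adj, fromEdgeSet_adj, Set.mem_singleton_iff] at hab
  tauto

theorem IsTopEdge.weight_lt {G : SimpleGraph V} {w : Sym2 V → ℝ} {v : V} {p : G.Walk v v}
    {e f : Sym2 V} (he : IsTopEdge w p e) (hw : ∀ g ∈ p.edges, 0 ≤ w g) (hf : f ∈ p.edges)
    (hfe : f ≠ e) : w f < w e := by
  classical
  have hsum : (p.edges.map w).sum = w e + ((p.edges.erase e).map w).sum := by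
    rw [((List.perm_cons_erase he.1).map w).sum_eq, List.map_cons, List.sum_cons]
  have hle : w f ≤ ((p.edges.erase e).map w).sum :=
    List.single_le_sum (by simpa using fun g hg => hw g (List.mem_of_mem_erase hg)) _
      (List.mem_map_of_mem ((List.mem_erase_of_ne hfe).mpr hf))
  linarith [he.2]

theorem IsTopEdge.eq {G : SimpleGraph V} {w : Sym2 V → ℝ} {v : V} {p : G.Walk v v}
    {e f : Sym2 V} (he : IsTopEdge w p e) (hf : IsTopEdge w p f)
    (hw : ∀ g ∈ p.edges, 0 ≤ w g) : f = e := by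
  by_contra hfe
  exact lt_asymm (he.weight_lt hw hf.1 hfe) (hf.weight_lt hw he.1 (Ne.symm hfe))

theorem nonTopCover_sup_fromEdgeSet_of_forall_not_reachable [Fintype V] {ι : Type*}
    {G : SimpleGraph V} {st : ι → V × V} {w : Sym2 V → ℝ} (hw1 : ∀ e ∈ G.edgeSet, w e = 1)
    (hwn : ∀ i, w s((st i).1, (st i).2) = Fintype.card V) {M : Set (Sym2 V)}
    (hM : ∀ i, ¬ (G.deleteEdges M).Reachable (st i).1 (st i).2) :
    NonTopCover (G ⊔ fromEdgeSet {e | ∃ i, e = s((st i).1, (st i).2)}) w M := by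
  rintro x c hc ⟨e, he⟩
  have hcases : ∀ f ∈ c.edges, f ∈ G.edgeSet ∨ ∃ i, f = s((st i).1, (st i).2) := by
    intro f hf
    have := c.edges_subset_edgeSet hf
    simp only [edgeSet_sup, edgeSet_fromEdgeSet, Set.mem_union, Set.mem_sdiff] at this
    tauto
  have hcard : (1 : ℝ) ≤ Fintype.card V := by exact_mod_cast Fintype.card_pos_iff.mpr ⟨x⟩
  have hw : ∀ f ∈ c.edges, 1 ≤ w f := by
    intro f hf
    rcases hcases f hf with hG | ⟨i, rfl⟩
    · rw [hw1 f hG]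
    · rw [hwn i]; exact hcard
  have hw0 : ∀ f ∈ c.edges, 0 ≤ w f := fun f hf => zero_le_one.trans (hw f hf)
  have hsum : (3 : ℝ) ≤ (c.edges.map w).sum := by
    have := List.card_nsmul_le_sum (c.edges.map w) 1 (by simpa using hw)
    rw [List.length_map, Walk.length_edges, nsmul_one] at this
    exact le_trans (by exact_mod_cast hc.three_le_length) this
  obtain ⟨i, rfl⟩ : ∃ i, e = s((st i).1, (st i).2) :=
    (hcases e he.1).resolve_left fun hG => by linarith [he.2, hw1 e hG]
  by_contra! hcover
  refine hM i (hc.reachable_of_forall_ne_mem_edgeSet he.1 fun f hf hfe => ?_)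
  have hfG : f ∈ G.edgeSet := (hcases f hf).resolve_right fun ⟨j, hj⟩ =>
    (he.weight_lt hw0 hf hfe).ne (by rw [hj, hwn, hwn])
  rw [edgeSet_deleteEdges]
  exact ⟨hfG, fun hfM => hfe ((hcover f hf hfM).eq he hw0).symm⟩

theorem not_reachable_deleteEdges_of_nonTopCover [Fintype V] {G G' : SimpleGraph V}
    (hGG' : G ≤ G') {w : Sym2 V → ℝ} (hw1 : ∀ e ∈ G.edgeSet, w e = 1) {s t : V}
    (hst : G'.Adj s t) (hnst : ¬ G.Adj s t) (hwst : w s(s, t) = Fintype.card V)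
    {M : Set (Sym2 V)} (hM : NonTopCover G' w M) : ¬ (G.deleteEdges M).Reachable s t := by
  classical
  rintro ⟨q⟩
  obtain ⟨p, hp⟩ := q.toPath
  have hpG : ∀ f ∈ p.edges, f ∈ G.edgeSet \ M := by
    simpa only [← edgeSet_deleteEdges] using fun f => p.edges_subset_edgeSet (e := f)
  have hpG' : ∀ f ∈ p.edges, f ∈ G'.edgeSet := fun f hf => edgeSet_mono hGG' (hpG f hf).1
  let c : G'.Walk t t := .cons hst.symm (p.transfer G' hpG')
  have hedges : c.edges = s(t, s) :: p.edges := by simp [c]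
  have hcyc : c.IsCycle := by
    refine (Walk.cons_isCycle_iff _ _).mpr ⟨hp.transfer hpG', fun hts => hnst ?_⟩
    rw [Walk.edges_transfer] at hts
    exact (G.mem_edgeSet.mp (hpG _ hts).1).symm
  have htop : IsTopEdge w c s(t, s) := by
    have hle := List.sum_le_card_nsmul (p.edges.map w) 1
      (by simpa using fun f hf => (hw1 f (hpG f hf).1).le)
    rw [List.length_map, Walk.length_edges, nsmul_one] at hle
    have hlt : (p.length : ℝ) < Fintype.card V := by exact_mod_cast hp.length_lt
    refine ⟨by simp [hedges], ?_⟩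
    rw [hedges, List.map_cons, List.sum_cons, Sym2.eq_swap, hwst]
    linarith
  obtain ⟨f, hfc, hfM, hfnt⟩ := hM t c hcyc ⟨_, htop⟩
  have hfp : f ∈ p.edges := by
    rw [hedges] at hfc
    exact (List.mem_cons.mp hfc).resolve_left (by rintro rfl; exact hfnt htop)
  exact (hpG f hfp).2 hfM

/-- In the multicut reduction graph `G'`, a set `M ⊆ E` is a non-top cover of
all unbalanced cycles of `G'` iff `M` is a multicut of `G` for the demand
pairs; consequently the minimum size of a multicut of `G` equals the minimum
size of a non-top cover of all unbalanced cycles of `G'`. -/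
theorem stmt9 [Fintype V] (G : SimpleGraph V)
    (k : ℕ) (st : Fin k → V × V)
    (hne : ∀ i, (st i).1 ≠ (st i).2)
    (hnadj : ∀ i, ¬ G.Adj (st i).1 (st i).2)
    (G' : SimpleGraph V)
    (hG' : G' = G ⊔ SimpleGraph.fromEdgeSet {e : Sym2 V | ∃ i, e = s((st i).1, (st i).2)})
    (w : Sym2 V → ℝ)
    (hw1 : ∀ e ∈ G.edgeSet, w e = 1)
    (hwn : ∀ i, w s((st i).1, (st i).2) = (Fintype.card V : ℝ)) :
    (∀ M : Set (Sym2 V), M ⊆ G.edgeSet →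
      (NonTopCover G' w M ↔
        ∀ i, ¬ (G.deleteEdges M).Reachable (st i).1 (st i).2)) ∧
    sInf {c : ℕ | ∃ M : Set (Sym2 V), M ⊆ G.edgeSet ∧
        (∀ i, ¬ (G.deleteEdges M).Reachable (st i).1 (st i).2) ∧ M.ncard = c} =
      sInf {c : ℕ | ∃ M : Set (Sym2 V), M ⊆ G'.edgeSet ∧
        NonTopCover G' w M ∧ M.ncard = c} := by
  subst hG'
  have hGG' : G ≤ G ⊔ fromEdgeSet {e | ∃ i, e = s((st i).1, (st i).2)} := le_sup_left
  have cover_of_cut M (hM : ∀ i, ¬ (G.deleteEdges M).Reachable (st i).1 (st i).2) :=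
    nonTopCover_sup_fromEdgeSet_of_forall_not_reachable hw1 hwn hM
  have cut_of_cover M (hM : NonTopCover _ w M) i :
      ¬ (G.deleteEdges M).Reachable (st i).1 (st i).2 :=
    not_reachable_deleteEdges_of_nonTopCover hGG' hw1
      (Or.inr ⟨⟨i, rfl⟩, hne i⟩) (hnadj i) (hwn i) hM
  refine ⟨fun M _ => ⟨cut_of_cover M, cover_of_cut M⟩, csInf_eq_csInf_of_forall_exists_le ?_ ?_⟩
  · rintro _ ⟨M, hMG, hM, rfl⟩
    exact ⟨_, ⟨M, hMG.trans (edgeSet_mono hGG'), cover_of_cut M hM, rfl⟩, le_rfl⟩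
  · rintro _ ⟨M, -, hM, rfl⟩
    refine ⟨_, ⟨M ∩ G.edgeSet, Set.inter_subset_right, ?_, rfl⟩, Set.ncard_inter_le_ncard_left _ _⟩
    simpa only [← deleteEdges_eq_inter_edgeSet] using cut_of_cover M hM
end
end

section
/- Let L be a positive integer, and let G=(V,E) be an undirected unweighted graph with source s and sink t such that (s,t)∉E. Let G'=(V,E') be the weighted graph with E'=E∪{(s,t)}, where every edge of E has weight 1 and the edge (s,t) has weight L+1. Then a cycle of G' is unbalanced if and only if it consists of the edge (s,t) together with at most L edges of E; consequently, a set M⊆E is a non-top cover of all unbalanced cycles of G' if and only if after removing M from G no s–t path of length at most L remains, and the minimum size of an L-length-bounded s–t cut of G equals the minimum size of a non-top cover of all unbalanced cycles of G'. -/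
/-!
Every edge of `G` weighs `1` and the added edge `s(s, t)` weighs `L + 1`, so a cycle of length
`n ≥ 3` through `s(s, t)` weighs `n + L`, and one avoiding it weighs `n`. Hence only `s(s, t)` can
be a top edge, and it is one exactly when `n ≤ L + 1`: the unbalanced cycles are the `s`–`t` paths
of `G` with at most `L` edges, closed up by `s(s, t)`, and their non-top edges are the edges of
those paths. A non-top cover of them is thus a length-bounded cut once its copy of `s(s, t)` (if
any) is discarded, which also shows that both minima agree.
-/

open SimpleGraph

noncomputable section

variable {V : Type*}

theorem Nat.sInf_eq_sInf_of_subset_of_forall_exists_le {A B : Set ℕ} (hAB : A ⊆ B)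
    (hBA : ∀ b ∈ B, ∃ a ∈ A, a ≤ b) : sInf A = sInf B := by
  rcases B.eq_empty_or_nonempty with rfl | hB
  · rw [Set.subset_empty_iff.1 hAB]
  obtain ⟨a, ha, hab⟩ := hBA _ (Nat.sInf_mem hB)
  exact le_antisymm ((Nat.sInf_le ha).trans hab) (Nat.sInf_le (hAB (Nat.sInf_mem ⟨a, ha⟩)))

theorem List.sum_map_eq_length_add_mul_count {α : Type*} [DecidableEq α] {w : α → ℝ} {a : α}
    {c : ℝ} {l : List α} (hw : ∀ e ∈ l, e ≠ a → w e = 1) (ha : w a = c + 1) :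
    (l.map w).sum = l.length + c * l.count a := by
  induction l with
  | nil => simp
  | cons b l ih =>
    rw [List.map_cons, List.sum_cons, ih fun e he => hw e (List.mem_cons_of_mem _ he),
      List.length_cons, List.count_cons]
    by_cases hb : b = a
    · subst hb
      simp only [ha, beq_self_eq_true, if_true]
      push_cast
      ring
    · simp only [hw b List.mem_cons_self hb, beq_iff_eq, hb, if_false]
      push_cast
      ring

namespace SimpleGraph.Walk.IsCycle

variable {G : SimpleGraph V} {u s t : V}

theorem exists_isPath_of_snd_eq {c : G.Walk s s} (hc : c.IsCycle) (hsnd : c.snd = t) :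
    ∃ p : G.Walk s t, p.IsPath ∧ s(s, t) ∉ p.edges ∧ p.edges ⊆ c.edges ∧
      p.length + 1 = c.length := by
  cases c with
  | nil => exact absurd hc not_isCycle_nil
  | cons h q =>
    rw [snd_cons] at hsnd
    subst hsnd
    obtain ⟨hq, hsq⟩ := (cons_isCycle_iff q h).1 hc
    refine ⟨q.reverse, hq.reverse, ?_, ?_, ?_⟩
    · simpa only [edges_reverse, List.mem_reverse] using hsq
    · intro e he
      rw [edges_reverse, List.mem_reverse] at he
      exact List.mem_cons_of_mem _ he
    · rw [length_reverse, length_cons]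

theorem exists_isPath_of_mem_edges {c : G.Walk u u} (hc : c.IsCycle) (he : s(s, t) ∈ c.edges) :
    ∃ p : G.Walk s t, p.IsPath ∧ s(s, t) ∉ p.edges ∧ p.edges ⊆ c.edges ∧
      p.length + 1 = c.length := by
  classical
  have hs : s ∈ c.support := c.fst_mem_support_of_mem_edges he
  have hrot : (c.rotate s hs).IsCycle := hc.rotate hs
  have hedges : ∀ e, e ∈ (c.rotate s hs).edges ↔ e ∈ c.edges :=
    fun e => (c.rotate_edges s hs).perm.mem_iff
  obtain ⟨c', hc', hsnd, hsub, hlen⟩ : ∃ c' : G.Walk s s, c'.IsCycle ∧ c'.snd = t ∧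
      c'.edges ⊆ c.edges ∧ c'.length = c.length := by
    have ht : t ∈ (c.rotate s hs).toSubgraph.neighborSet s := by
      rw [Subgraph.mem_neighborSet, ← Subgraph.mem_edgeSet, mem_edges_toSubgraph, hedges]
      exact he
    -- a cycle based at `s` enters and leaves `s` only through its first and last edges
    rw [hrot.neighborSet_toSubgraph_endpoint] at ht
    rcases ht with ht | ht
    · exact ⟨_, hrot, ht.symm, fun e => (hedges e).1, length_rotate ..⟩
    · refine ⟨_, hrot.reverse, (snd_reverse _).trans ht.symm, fun e he => ?_, ?_⟩
      · rw [edges_reverse, List.mem_reverse, hedges] at he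
        exact he
      · rw [length_reverse, length_rotate]
  obtain ⟨p, hp, hpst, hpsub, hplen⟩ := hc'.exists_isPath_of_snd_eq hsnd
  exact ⟨p, hp, hpst, fun e he => hsub (hpsub he), hplen.trans hlen⟩

end SimpleGraph.Walk.IsCycle

section WeightedCycle

variable {H : SimpleGraph V} {s t u : V} {w : Sym2 V → ℝ} {L : ℕ}

theorem isTopEdge_iff (hw : ∀ e ∈ H.edgeSet, e ≠ s(s, t) → w e = 1)
    (hwL : w s(s, t) = (L : ℝ) + 1) {c : H.Walk u u} (hc : c.IsCycle) {e : Sym2 V} :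
    IsTopEdge w c e ↔ e = s(s, t) ∧ e ∈ c.edges ∧ c.length ≤ L + 1 := by
  classical
  have hsum : (c.edges.map w).sum = c.length + L * c.edges.count s(s, t) := by
    rw [List.sum_map_eq_length_add_mul_count (fun e he => hw e (c.edges_subset_edgeSet he)) hwL,
      Walk.length_edges]
  have h3 : (3 : ℝ) ≤ c.length := by exact_mod_cast hc.three_le_length
  rw [IsTopEdge, hsum]
  constructor
  · rintro ⟨he, hlt⟩
    by_cases he0 : e = s(s, t)
    · subst he0
      rw [List.count_eq_one_of_mem hc.edges_nodup he, Nat.cast_one, hwL] at hlt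
      have hlt' : c.length < L + 2 := by exact_mod_cast (by linarith : (c.length : ℝ) < L + 2)
      exact ⟨rfl, he, by omega⟩
    · rw [hw e (c.edges_subset_edgeSet he) he0] at hlt
      have : (0 : ℝ) ≤ L * c.edges.count s(s, t) := by positivity
      linarith
  · rintro ⟨rfl, he, hlen⟩
    refine ⟨he, ?_⟩
    rw [List.count_eq_one_of_mem hc.edges_nodup he, Nat.cast_one, hwL]
    have : (c.length : ℝ) ≤ L + 1 := by exact_mod_cast hlen
    linarith

theorem isUnbalanced_iff (hw : ∀ e ∈ H.edgeSet, e ≠ s(s, t) → w e = 1)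
    (hwL : w s(s, t) = (L : ℝ) + 1) {c : H.Walk u u} (hc : c.IsCycle) :
    IsUnbalanced w c ↔ s(s, t) ∈ c.edges ∧ c.length ≤ L + 1 := by
  simp only [IsUnbalanced, isTopEdge_iff hw hwL hc, exists_eq_left]

end WeightedCycle

section AddedEdge

variable {G : SimpleGraph V} {s t : V} {w : Sym2 V → ℝ} {L : ℕ}

theorem mem_edgeSet_sup_edge (hst : s ≠ t) {e : Sym2 V} :
    e ∈ (G ⊔ edge s t).edgeSet ↔ e ∈ G.edgeSet ∨ e = s(s, t) := by
  rw [edgeSet_sup, edgeSet_edge_of_ne hst, Set.mem_union, Set.mem_singleton_iff]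

theorem weight_sup_edge_eq_one (hst : s ≠ t) (hw1 : ∀ e ∈ G.edgeSet, w e = 1) :
    ∀ e ∈ (G ⊔ edge s t).edgeSet, e ≠ s(s, t) → w e = 1 :=
  fun e he hne => hw1 e (((mem_edgeSet_sup_edge hst).1 he).resolve_right hne)

theorem nonTopCover_sup_edge_iff (hst : s ≠ t) (hnadj : ¬ G.Adj s t)
    (hw1 : ∀ e ∈ G.edgeSet, w e = 1) (hwL : w s(s, t) = (L : ℝ) + 1) {M : Set (Sym2 V)}
    (hM : M ⊆ G.edgeSet) :
    NonTopCover (G ⊔ edge s t) w M ↔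
      ∀ p : (G.deleteEdges M).Walk s t, p.IsPath → L < p.length := by
  have hw := weight_sup_edge_eq_one hst hw1
  constructor
  · intro hcover p hp
    by_contra! hlen
    have hle : G.deleteEdges M ≤ G ⊔ edge s t := (deleteEdges_le M).trans le_sup_left
    have hpG : ∀ e ∈ p.edges, e ∈ G.edgeSet ∧ e ∉ M := fun e he => by
      simpa only [edgeSet_deleteEdges, Set.mem_sdiff] using p.edges_subset_edgeSet he
    have hadj : (G ⊔ edge s t).Adj t s := Or.inr ((edge_adj s t t s).2 ⟨Or.inr ⟨rfl, rfl⟩, hst.symm⟩)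
    have hc : (Walk.cons hadj (p.mapLe hle)).IsCycle := by
      refine (Walk.cons_isCycle_iff _ hadj).2 ⟨hp.mapLe hle, ?_⟩
      rw [Walk.edges_mapLe_eq_edges, Sym2.eq_swap]
      exact fun h => hnadj (hpG _ h).1
    obtain ⟨e, hec, heM, -⟩ := hcover t _ hc <| (isUnbalanced_iff hw hwL hc).2
      ⟨by simp [Sym2.eq_swap], by rw [Walk.length_cons, Walk.length_mapLe]; omega⟩
    rw [Walk.edges_cons, Walk.edges_mapLe_eq_edges, List.mem_cons] at hec
    rcases hec with rfl | hec
    · exact hnadj (hM (Sym2.eq_swap ▸ heM))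
    · exact (hpG e hec).2 heM
  · intro hcut v c hc hunb
    obtain ⟨hmem, hlen⟩ := (isUnbalanced_iff hw hwL hc).1 hunb
    obtain ⟨p, hp, hpst, hsub, hplen⟩ := hc.exists_isPath_of_mem_edges hmem
    obtain ⟨e, hep, heM⟩ : ∃ e ∈ p.edges, e ∈ M := by
      by_contra! hnot
      have htr : ∀ e ∈ p.edges, e ∈ (G.deleteEdges M).edgeSet := fun e he => by
        rw [edgeSet_deleteEdges]
        exact ⟨((mem_edgeSet_sup_edge hst).1 (p.edges_subset_edgeSet he)).resolve_right
          (ne_of_mem_of_not_mem he hpst), hnot e he⟩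
      have := hcut (p.transfer _ htr) (hp.transfer htr)
      rw [Walk.length_transfer] at this
      omega
    exact ⟨e, hsub hep, heM, fun htop =>
      ne_of_mem_of_not_mem hep hpst ((isTopEdge_iff hw hwL hc).1 htop).1⟩

theorem NonTopCover.inter_edgeSet_of_sup_edge (hst : s ≠ t) (hw1 : ∀ e ∈ G.edgeSet, w e = 1)
    (hwL : w s(s, t) = (L : ℝ) + 1) {M : Set (Sym2 V)} (h : NonTopCover (G ⊔ edge s t) w M) :
    NonTopCover (G ⊔ edge s t) w (M ∩ G.edgeSet) := by
  have hw := weight_sup_edge_eq_one hst hw1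
  intro v c hc hunb
  obtain ⟨e, hec, heM, htop⟩ := h v c hc hunb
  have hne : e ≠ s(s, t) := by
    rintro rfl
    exact htop ((isTopEdge_iff hw hwL hc).2 ⟨rfl, (isUnbalanced_iff hw hwL hc).1 hunb⟩)
  exact ⟨e, hec,
    ⟨heM, ((mem_edgeSet_sup_edge hst).1 (c.edges_subset_edgeSet hec)).resolve_right hne⟩, htop⟩

end AddedEdge

theorem stmt10_general [Fintype V] (G : SimpleGraph V) (L : ℕ)
    (s t : V) (hst : s ≠ t) (hnadj : ¬ G.Adj s t)
    (G' : SimpleGraph V)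
    (hG' : G' = G ⊔ SimpleGraph.fromEdgeSet {s(s, t)})
    (w : Sym2 V → ℝ)
    (hw1 : ∀ e ∈ G.edgeSet, w e = 1)
    (hwL : w s(s, t) = (L : ℝ) + 1) :
    (∀ (v : V) (p : G'.Walk v v), p.IsCycle →
      (IsUnbalanced w p ↔ s(s, t) ∈ p.edges ∧ p.length ≤ L + 1)) ∧
    (∀ M : Set (Sym2 V), M ⊆ G.edgeSet →
      (NonTopCover G' w M ↔
        ∀ p : (G.deleteEdges M).Walk s t, p.IsPath → L < p.length)) ∧
    sInf {c : ℕ | ∃ M : Set (Sym2 V), M ⊆ G.edgeSet ∧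
        (∀ p : (G.deleteEdges M).Walk s t, p.IsPath → L < p.length) ∧ M.ncard = c} =
      sInf {c : ℕ | ∃ M : Set (Sym2 V), M ⊆ G'.edgeSet ∧
        NonTopCover G' w M ∧ M.ncard = c} := by
  obtain rfl : G' = G ⊔ edge s t := hG'
  have hcover_iff := fun M (hM : M ⊆ G.edgeSet) => nonTopCover_sup_edge_iff hst hnadj hw1 hwL hM
  refine ⟨fun v p hc => isUnbalanced_iff (weight_sup_edge_eq_one hst hw1) hwL hc,
    hcover_iff, Nat.sInf_eq_sInf_of_subset_of_forall_exists_le ?_ ?_⟩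
  · rintro _ ⟨M, hM, hcut, rfl⟩
    exact ⟨M, hM.trans (edgeSet_mono le_sup_left), (hcover_iff M hM).2 hcut, rfl⟩
  · rintro _ ⟨M, -, hcover, rfl⟩
    exact ⟨_, ⟨M ∩ G.edgeSet, Set.inter_subset_right, (hcover_iff _ Set.inter_subset_right).1
      (hcover.inter_edgeSet_of_sup_edge hst hw1 hwL), rfl⟩, Set.ncard_le_ncard Set.inter_subset_left⟩

/-- The length-bounded cut reduction: in `G'` (weight `1` on edges of `G`,
weight `L+1` on the added edge `(s,t)`) a cycle is unbalanced iff it consists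
of the edge `(s,t)` together with at most `L` edges of `E`; a set `M ⊆ E` is a
non-top cover of all unbalanced cycles of `G'` iff removing `M` from `G`
destroys all `s`–`t` paths with at most `L` edges; and the minimum size of an
`L`-length-bounded `s`–`t` cut of `G` equals the minimum size of a non-top
cover of all unbalanced cycles of `G'`. -/
theorem stmt10 [Fintype V] (G : SimpleGraph V) (L : ℕ) (hL : 0 < L)
    (s t : V) (hst : s ≠ t) (hnadj : ¬ G.Adj s t)
    (G' : SimpleGraph V)
    (hG' : G' = G ⊔ SimpleGraph.fromEdgeSet {s(s, t)})
    (w : Sym2 V → ℝ)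
    (hw1 : ∀ e ∈ G.edgeSet, w e = 1)
    (hwL : w s(s, t) = (L : ℝ) + 1) :
    (∀ (v : V) (p : G'.Walk v v), p.IsCycle →
      (IsUnbalanced w p ↔ s(s, t) ∈ p.edges ∧ p.length ≤ L + 1)) ∧
    (∀ M : Set (Sym2 V), M ⊆ G.edgeSet →
      (NonTopCover G' w M ↔
        ∀ p : (G.deleteEdges M).Walk s t, p.IsPath → L < p.length)) ∧
    sInf {c : ℕ | ∃ M : Set (Sym2 V), M ⊆ G.edgeSet ∧
        (∀ p : (G.deleteEdges M).Walk s t, p.IsPath → L < p.length) ∧ M.ncard = c} =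
      sInf {c : ℕ | ∃ M : Set (Sym2 V), M ⊆ G'.edgeSet ∧
        NonTopCover G' w M ∧ M.ncard = c} :=
  stmt10_general G L s t hst hnadj G' hG' w hw1 hwL
end
end

section
/- Let G=(V,E) be a general dissimilarity graph, let T={(s₁,t₁),...,(s_{|T|},t_{|T|})} be the set of edges that are top edges of some unbalanced cycle of G, and let L = 1 + max_{e∈E} w(e). Form G'=(V',E') by adding, for each 1≤i≤|T| and each 1≤j≤|E|+1, a new vertex v_{ij} together with edges (sᵢ,v_{ij}) of weight L and (tᵢ,v_{ij}) of weight L − w((sᵢ,tᵢ)). Then for every unbalanced cycle C of G with top edge (sᵢ,tᵢ) and every j, the cycle C' = (C∖(sᵢ,tᵢ)) ∪ {(sᵢ,v_{ij}), (tᵢ,v_{ij})} is an unbalanced cycle of G' with top edge (sᵢ,v_{ij}). -/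
open SimpleGraph

noncomputable section

variable {V : Type*}

/-- The number of distinct shortest paths from `u` to `v`. -/
def csp (G : SimpleGraph V) (w : Sym2 V → ℝ) (u v : V) : ℕ :=
  Nat.card {p : G.Walk u v // p.IsPath ∧ wlen w p = spDist G w u v}

/-- `c` is the edge set of some cycle of `G`.  (A cycle is determined, up to
rotation and reflection, by its edge set.) -/
def IsCycleSet [DecidableEq V] (G : SimpleGraph V) (c : Finset (Sym2 V)) : Prop :=
  ∃ (v : V) (p : G.Walk v v), p.IsCycle ∧ p.edges.toFinset = c

/-- `e` is a top edge of the cycle with edge set `c`: it lies in `c` and its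
weight strictly exceeds the sum of the weights of all the other edges of `c`. -/
def TopOfSet [DecidableEq V] (w : Sym2 V → ℝ) (c : Finset (Sym2 V)) (e : Sym2 V) : Prop :=
  e ∈ c ∧ ∑ f ∈ c.erase e, w f < w e

/-- A cycle is unbalanced if it has a top edge. -/
def UnbalancedSet [DecidableEq V] (w : Sym2 V → ℝ) (c : Finset (Sym2 V)) : Prop :=
  ∃ e, TopOfSet w c e

/-- `S` contains at least one edge of every unbalanced cycle. -/
def RegularCoverSet [DecidableEq V] (G : SimpleGraph V) (w : Sym2 V → ℝ)
    (S : Set (Sym2 V)) : Prop :=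
  ∀ c : Finset (Sym2 V), IsCycleSet G c → UnbalancedSet w c → ∃ e ∈ c, e ∈ S

/-- `S` contains at least one non-top edge of every unbalanced cycle. -/
def NonTopCoverSet [DecidableEq V] (G : SimpleGraph V) (w : Sym2 V → ℝ)
    (S : Set (Sym2 V)) : Prop :=
  ∀ c : Finset (Sym2 V), IsCycleSet G c → UnbalancedSet w c →
    ∃ e ∈ c, e ∈ S ∧ ¬ TopOfSet w c e

/-- The deficit of a cycle with edge set `c`: the largest edge weight minus the
sum of the weights of all the other edges. -/
def deficitSet (w : Sym2 V → ℝ) (c : Finset (Sym2 V)) : ℝ :=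
  2 * sSup (w '' (c : Set (Sym2 V))) - ∑ f ∈ c, w f

/-- `δ(G)`: the maximum deficit over all cycles of `G`. -/
def deltaG [DecidableEq V] (G : SimpleGraph V) (w : Sym2 V → ℝ) : ℝ :=
  sSup {x : ℝ | ∃ c : Finset (Sym2 V), IsCycleSet G c ∧ deficitSet w c = x}

/-- `N_T(e, a)`: the number of distinct unbalanced cycles of deficit `a`
whose top edge is `e`. -/
def NT [DecidableEq V] (G : SimpleGraph V) (w : Sym2 V → ℝ) (e : Sym2 V) (a : ℝ) : ℕ :=
  Nat.card {c : Finset (Sym2 V) // IsCycleSet G c ∧ TopOfSet w c e ∧ deficitSet w c = a}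

/-- `N_U(e, a)`: the number of distinct unbalanced cycles of deficit `a`
containing `e` as a non-top edge. -/
def NU [DecidableEq V] (G : SimpleGraph V) (w : Sym2 V → ℝ) (e : Sym2 V) (a : ℝ) : ℕ :=
  Nat.card {c : Finset (Sym2 V) // IsCycleSet G c ∧ UnbalancedSet w c ∧
    e ∈ c ∧ ¬ TopOfSet w c e ∧ deficitSet w c = a}

/-!
Deleting the top edge `s t` from a cycle `C` of `G` leaves a path from `t` to `s`; closing it
through a fresh vertex `v` adjacent to `s` and `t` gives a cycle `C'` of `G'`. The edges of `C'`
other than `s v` weigh `w(C ∖ s t) + (L - w(s t))`, which is less than `L = w'(s v)` exactly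
because `s t` is a top edge of `C`.
-/
namespace SimpleGraph.Walk

variable {G : SimpleGraph V} {a b u v x : V}

theorem IsCycle.exists_isCycle_snd_eq [DecidableEq V] {p : G.Walk v v} (hp : p.IsCycle)
    (h : s(a, b) ∈ p.edges) :
    ∃ p' : G.Walk a a, p'.IsCycle ∧ p'.snd = b ∧ p'.edges.Perm p.edges := by
  have ha : a ∈ p.support := p.fst_mem_support_of_mem_edges h
  have hr : (p.rotate a ha).IsCycle := hp.rotate ha
  have hperm : (p.rotate a ha).edges.Perm p.edges := (p.rotate_edges a ha).perm
  have hb : b ∈ (p.rotate a ha).toSubgraph.neighborSet a := by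
    rw [Subgraph.mem_neighborSet, ← Subgraph.mem_edgeSet, mem_edges_toSubgraph]
    exact hperm.mem_iff.mpr h
  rw [hr.neighborSet_toSubgraph_endpoint] at hb
  rcases hb with hb | hb
  · exact ⟨_, hr, hb.symm, hperm⟩
  · refine ⟨_, hr.reverse, by rw [snd_reverse, hb], ?_⟩
    rw [edges_reverse]
    exact (List.reverse_perm _).trans hperm

theorem IsCycle.exists_isPath_cons_perm [DecidableEq V] {p : G.Walk v v} (hp : p.IsCycle)
    (h : s(a, b) ∈ p.edges) :
    ∃ q : G.Walk b a, q.IsPath ∧ s(a, b) ∉ q.edges ∧ (s(a, b) :: q.edges).Perm p.edges := by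
  obtain ⟨p', hp', rfl, hperm⟩ := hp.exists_isCycle_snd_eq h
  have hcons := p'.cons_tail_eq hp'.not_nil
  rw [← hcons, cons_isCycle_iff] at hp'
  rw [← hcons, edges_cons] at hperm
  exact ⟨p'.tail, hp'.1, hp'.2, hperm⟩

theorem IsPath.isCycle_cons_concat {q : G.Walk u v} (hq : q.IsPath) (hx : x ∉ q.support)
    (huv : u ≠ v) (hxu : G.Adj x u) (hvx : G.Adj v x) : (cons hxu (q.concat hvx)).IsCycle := by
  refine (cons_isCycle_iff _ _).mpr ⟨hq.concat hx hvx, ?_⟩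
  rw [edges_concat, List.concat_eq_append, List.mem_append, List.mem_singleton, Sym2.eq_swap,
    Sym2.eq_iff]
  rintro (hmem | ⟨rfl, -⟩ | ⟨rfl, -⟩)
  · exact hx (q.snd_mem_support_of_mem_edges hmem)
  · exact huv rfl
  · exact hx q.start_mem_support

end SimpleGraph.Walk

section CycleSets

variable {W : Type*} [DecidableEq V] [DecidableEq W] {G : SimpleGraph V} {G' : SimpleGraph W}
  {c : Finset (Sym2 V)} {a b : V} {x : W}

theorem IsCycleSet.subset_edgeSet (hc : IsCycleSet G c) : ∀ e ∈ c, e ∈ G.edgeSet := by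
  obtain ⟨v, p, -, rfl⟩ := hc
  exact fun e he => p.edges_subset_edgeSet (List.mem_toFinset.mp he)

theorem IsCycleSet.exists_isPath_edges_toFinset_eq_erase (hc : IsCycleSet G c) (h : s(a, b) ∈ c) :
    ∃ q : G.Walk b a, q.IsPath ∧ q.edges.toFinset = c.erase s(a, b) := by
  obtain ⟨v, p, hp, rfl⟩ := hc
  obtain ⟨q, hq, hab, hperm⟩ := hp.exists_isPath_cons_perm (List.mem_toFinset.mp h)
  refine ⟨q, hq, ?_⟩
  rw [← List.toFinset_eq_of_perm _ _ hperm, List.toFinset_cons,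
    Finset.erase_insert (List.mem_toFinset.not.mpr hab)]

theorem IsCycleSet.image_erase_union_pair (hc : IsCycleSet G c) (f : G →g G')
    (hf : Function.Injective f) (hx : x ∉ Set.range f) (h : s(a, b) ∈ c)
    (hax : G'.Adj (f a) x) (hbx : G'.Adj (f b) x) :
    IsCycleSet G' ((c.erase s(a, b)).image (Sym2.map f) ∪ {s(f a, x), s(f b, x)}) := by
  obtain ⟨q, hq, hqc⟩ := hc.exists_isPath_edges_toFinset_eq_erase h
  have hba : f b ≠ f a := hf.ne (G.adj_symm (hc.subset_edgeSet _ h)).ne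
  have hxq : x ∉ (q.map f).support := by
    rw [Walk.support_map]
    intro hmem
    obtain ⟨v, -, hv⟩ := List.mem_map.mp hmem
    exact hx ⟨v, hv⟩
  refine ⟨x, _, (hq.map hf).isCycle_cons_concat hxq hba hbx.symm hax, ?_⟩
  rw [Walk.edges_cons, Walk.edges_concat, Walk.edges_map, ← hqc]
  ext e
  simp only [List.concat_eq_append, List.toFinset_cons, List.toFinset_append, List.toFinset_nil,
    Finset.mem_insert, Finset.mem_union, Finset.mem_image, Finset.mem_singleton, List.mem_toFinset,
    List.mem_map, insert_empty_eq, Sym2.eq_swap (a := x)]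
  rw [or_comm, or_assoc]

theorem TopOfSet.image_erase_union_pair {w : Sym2 V → ℝ} {w' : Sym2 W → ℝ} {f : V → W}
    (hf : Function.Injective f) (hx : x ∉ Set.range f) (hab : a ≠ b)
    (hw : ∀ e ∈ c, w' (Sym2.map f e) = w e) (htop : TopOfSet w c s(a, b))
    (hwx : w s(a, b) + w' s(f b, x) ≤ w' s(f a, x)) :
    TopOfSet w' ((c.erase s(a, b)).image (Sym2.map f) ∪ {s(f a, x), s(f b, x)}) s(f a, x) := by
  have hnot : ∀ y, s(y, x) ∉ (c.erase s(a, b)).image (Sym2.map f) := by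
    intro y hy
    obtain ⟨e, -, he⟩ := Finset.mem_image.mp hy
    obtain ⟨z, -, hz⟩ := Sym2.mem_map.mp (he ▸ Sym2.mem_mk_right y x)
    exact hx ⟨z, hz⟩
  have hne : s(f a, x) ∉ ({s(f b, x)} : Finset (Sym2 W)) := by
    rw [Finset.mem_singleton, Sym2.congr_left]
    exact hf.ne hab
  refine ⟨by simp, ?_⟩
  rw [Finset.erase_union_distrib, Finset.erase_eq_of_notMem (hnot _), Finset.erase_insert hne,
    Finset.sum_union (Finset.disjoint_singleton_right.mpr (hnot _)), Finset.sum_singleton,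
    Finset.sum_image fun _ _ _ _ h => Sym2.map.injective hf h]
  calc ∑ e ∈ c.erase s(a, b), w' (Sym2.map f e) + w' s(f b, x)
      = ∑ e ∈ c.erase s(a, b), w e + w' s(f b, x) := by
        rw [Finset.sum_congr rfl fun e he => hw e (Finset.mem_of_mem_erase he)]
    _ < w s(a, b) + w' s(f b, x) := by gcongr; exact htop.2
    _ ≤ w' s(f a, x) := hwx

end CycleSets

theorem stmt11_general {ι : Type*} [DecidableEq ι] [Fintype V] [DecidableEq V]
    (G : SimpleGraph V) [DecidableRel G.Adj]
    (w : Sym2 V → ℝ)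
    (st : ι → V × V)
    (L : ℝ)
    (G' : SimpleGraph (V ⊕ ι × Fin (G.edgeFinset.card + 1)))
    (hG' : G' = SimpleGraph.fromEdgeSet
      ((Sym2.map Sum.inl '' G.edgeSet) ∪
        {e | ∃ (i : ι) (j : Fin (G.edgeFinset.card + 1)),
          e = s(Sum.inl (st i).1, Sum.inr (i, j))} ∪
        {e | ∃ (i : ι) (j : Fin (G.edgeFinset.card + 1)),
          e = s(Sum.inl (st i).2, Sum.inr (i, j))}))
    (w' : Sym2 (V ⊕ ι × Fin (G.edgeFinset.card + 1)) → ℝ)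
    (hw'1 : ∀ e ∈ G.edgeSet, w' (Sym2.map Sum.inl e) = w e)
    (hw'2 : ∀ (i : ι) (j : Fin (G.edgeFinset.card + 1)),
      w' s(Sum.inl (st i).1, Sum.inr (i, j)) = L)
    (hw'3 : ∀ (i : ι) (j : Fin (G.edgeFinset.card + 1)),
      w' s(Sum.inl (st i).2, Sum.inr (i, j)) = L - w s((st i).1, (st i).2)) :
    ∀ c : Finset (Sym2 V), IsCycleSet G c →
      ∀ i : ι, TopOfSet w c s((st i).1, (st i).2) →
        ∀ j : Fin (G.edgeFinset.card + 1),
          IsCycleSet G'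
            ((c.erase s((st i).1, (st i).2)).image (Sym2.map Sum.inl) ∪
              {s(Sum.inl (st i).1, Sum.inr (i, j)), s(Sum.inl (st i).2, Sum.inr (i, j))}) ∧
          UnbalancedSet w'
            ((c.erase s((st i).1, (st i).2)).image (Sym2.map Sum.inl) ∪
              {s(Sum.inl (st i).1, Sum.inr (i, j)), s(Sum.inl (st i).2, Sum.inr (i, j))}) ∧
          TopOfSet w'
            ((c.erase s((st i).1, (st i).2)).image (Sym2.map Sum.inl) ∪
              {s(Sum.inl (st i).1, Sum.inr (i, j)), s(Sum.inl (st i).2, Sum.inr (i, j))})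
            s(Sum.inl (st i).1, Sum.inr (i, j)) := by
  intro c hc i htop j
  have hst : G.Adj (st i).1 (st i).2 := hc.subset_edgeSet _ htop.1
  have hsx : G'.Adj (Sum.inl (st i).1) (Sum.inr (i, j)) := by
    rw [hG', fromEdgeSet_adj]
    exact ⟨Or.inl (Or.inr ⟨i, j, rfl⟩), Sum.inl_ne_inr⟩
  have htx : G'.Adj (Sum.inl (st i).2) (Sum.inr (i, j)) := by
    rw [hG', fromEdgeSet_adj]
    exact ⟨Or.inr ⟨i, j, rfl⟩, Sum.inl_ne_inr⟩
  let f : G →g G' := ⟨Sum.inl, fun huv => by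
    rw [hG', fromEdgeSet_adj]
    exact ⟨Or.inl (Or.inl ⟨_, huv, Sym2.map_mk _ _ _⟩), by simpa using huv.ne⟩⟩
  have hx : Sum.inr (i, j) ∉ Set.range f := by rintro ⟨_, ⟨⟩⟩
  have htop' := htop.image_erase_union_pair Sum.inl_injective hx hst.ne
    (fun e he => hw'1 e (hc.subset_edgeSet e he)) (by rw [hw'2, hw'3, add_sub_cancel])
  exact ⟨hc.image_erase_union_pair f Sum.inl_injective hx htop.1 hsx htx, ⟨_, htop'⟩, htop'⟩

/-- In the GMVID → GMVD reduction graph `G'` (built by attaching, for each top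
edge `(sᵢ,tᵢ)` of `G` and each `1 ≤ j ≤ |E|+1`, a new vertex `v_{ij}` with
edges `(sᵢ,v_{ij})` of weight `L` and `(tᵢ,v_{ij})` of weight `L − w(sᵢ,tᵢ)`),
every unbalanced cycle `C` of `G` with top edge `(sᵢ,tᵢ)` gives, for every `j`,
an unbalanced cycle `C' = (C ∖ (sᵢ,tᵢ)) ∪ {(sᵢ,v_{ij}), (tᵢ,v_{ij})}` of `G'`
with top edge `(sᵢ,v_{ij})`. -/
theorem stmt11 {ι : Type*} [DecidableEq ι] [Fintype V] [DecidableEq V]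
    (G : SimpleGraph V) [DecidableRel G.Adj] (hconn : G.Connected)
    (w : Sym2 V → ℝ) (hw : ∀ e ∈ G.edgeSet, 0 < w e)
    (st : ι → V × V)
    (hT1 : ∀ i : ι, ∃ c : Finset (Sym2 V),
      IsCycleSet G c ∧ TopOfSet w c s((st i).1, (st i).2))
    (hT2 : ∀ (e : Sym2 V) (c : Finset (Sym2 V)), IsCycleSet G c → TopOfSet w c e →
      ∃ i : ι, e = s((st i).1, (st i).2))
    (L : ℝ) (hL : L = 1 + sSup (w '' G.edgeSet))
    (G' : SimpleGraph (V ⊕ ι × Fin (G.edgeFinset.card + 1)))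
    (hG' : G' = SimpleGraph.fromEdgeSet
      ((Sym2.map Sum.inl '' G.edgeSet) ∪
        {e | ∃ (i : ι) (j : Fin (G.edgeFinset.card + 1)),
          e = s(Sum.inl (st i).1, Sum.inr (i, j))} ∪
        {e | ∃ (i : ι) (j : Fin (G.edgeFinset.card + 1)),
          e = s(Sum.inl (st i).2, Sum.inr (i, j))}))
    (w' : Sym2 (V ⊕ ι × Fin (G.edgeFinset.card + 1)) → ℝ)
    (hw'1 : ∀ e ∈ G.edgeSet, w' (Sym2.map Sum.inl e) = w e)
    (hw'2 : ∀ (i : ι) (j : Fin (G.edgeFinset.card + 1)),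
      w' s(Sum.inl (st i).1, Sum.inr (i, j)) = L)
    (hw'3 : ∀ (i : ι) (j : Fin (G.edgeFinset.card + 1)),
      w' s(Sum.inl (st i).2, Sum.inr (i, j)) = L - w s((st i).1, (st i).2)) :
    ∀ c : Finset (Sym2 V), IsCycleSet G c →
      ∀ i : ι, TopOfSet w c s((st i).1, (st i).2) →
        ∀ j : Fin (G.edgeFinset.card + 1),
          IsCycleSet G'
            ((c.erase s((st i).1, (st i).2)).image (Sym2.map Sum.inl) ∪
              {s(Sum.inl (st i).1, Sum.inr (i, j)), s(Sum.inl (st i).2, Sum.inr (i, j))}) ∧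
          UnbalancedSet w'
            ((c.erase s((st i).1, (st i).2)).image (Sym2.map Sum.inl) ∪
              {s(Sum.inl (st i).1, Sum.inr (i, j)), s(Sum.inl (st i).2, Sum.inr (i, j))}) ∧
          TopOfSet w'
            ((c.erase s((st i).1, (st i).2)).image (Sym2.map Sum.inl) ∪
              {s(Sum.inl (st i).1, Sum.inr (i, j)), s(Sum.inl (st i).2, Sum.inr (i, j))})
            s(Sum.inl (st i).1, Sum.inr (i, j)) :=
  stmt11_general G w st L G' hG' w' hw'1 hw'2 hw'3
end
end

section
/- Let G=(V,E) be a general dissimilarity graph, let T={(s₁,t₁),...,(s_{|T|},t_{|T|})} be the set of edges that are top edges of some unbalanced cycle of G, and let L = 1 + max_{e∈E} w(e). Form G'=(V',E') by adding, for each 1≤i≤|T| and each 1≤j≤|E|+1, a new vertex v_{ij} together with edges (sᵢ,v_{ij}) of weight L and (tᵢ,v_{ij}) of weight L − w((sᵢ,tᵢ)). Then every unbalanced cycle of G' is either an unbalanced cycle of G, or is obtained from an unbalanced cycle C of G with top edge (sᵢ,tᵢ) by replacing the edge (sᵢ,tᵢ) with the pair of edges (sᵢ,v_{ij}),(tᵢ,v_{ij})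 for some j. -/
open SimpleGraph

noncomputable section

variable {V : Type*}

/-! All edge weights of `G'` lie in `(0, L]` and `(sᵢ, v_{ij})` has the maximal weight `L`,
so any unbalanced cycle through a new vertex `v_{ij}` has `(sᵢ, v_{ij})` as its top edge.
Distinct new vertices give distinct such edges, hence an unbalanced cycle meets at most one
new vertex. If it meets none, it is a cycle of `G` with the same weights. If it meets
`v_{ij}`, the rest of it is an `sᵢ`–`tᵢ` path `P` of `G`, and unbalancedness reads
`L > (L - w(sᵢ,tᵢ)) + w(P)`, i.e. `w(P) < w(sᵢ,tᵢ)`; so `P` avoids the edge `(sᵢ,tᵢ)` and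
closes up with it to an unbalanced cycle of `G` with top edge `(sᵢ,tᵢ)`. -/

lemma Finset.notMem_of_sum_lt {ι M : Type*} [AddCommMonoid M] [PartialOrder M]
    [IsOrderedAddMonoid M] {s : Finset ι} {f : ι → M} (hf : ∀ i ∈ s, 0 ≤ f i) {a : ι}
    (h : ∑ i ∈ s, f i < f a) : a ∉ s :=
  fun ha => (Finset.single_le_sum hf ha).not_gt h

namespace TopOfSet

variable [DecidableEq V] {w : Sym2 V → ℝ} {c : Finset (Sym2 V)} {e f : Sym2 V}

lemma lt_of_mem_erase (hc : ∀ g ∈ c, 0 ≤ w g) (he : TopOfSet w c e) (hf : f ∈ c.erase e) :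
    w f < w e :=
  (Finset.single_le_sum (fun g hg => hc g (Finset.mem_of_mem_erase hg)) hf).trans_lt he.2

lemma eq_of_forall_le (hc : ∀ g ∈ c, 0 ≤ w g) (he : TopOfSet w c e) (hf : f ∈ c)
    (hmax : ∀ g ∈ c, w g ≤ w f) : e = f := by
  by_contra hne
  exact (he.lt_of_mem_erase hc (Finset.mem_erase.mpr ⟨Ne.symm hne, hf⟩)).not_ge (hmax e he.1)

end TopOfSet

lemma topOfSet_image_iff {W : Type*} [DecidableEq V] [DecidableEq W] {f : Sym2 V → Sym2 W}
    (hf : Function.Injective f) {w : Sym2 V → ℝ} {w' : Sym2 W → ℝ} {c : Finset (Sym2 V)}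
    (hw : ∀ g ∈ c, w' (f g) = w g) {e : Sym2 V} :
    TopOfSet w' (c.image f) (f e) ↔ TopOfSet w c e := by
  have hsum : ∑ g ∈ (c.image f).erase (f e), w' g = ∑ g ∈ c.erase e, w g := by
    rw [← Finset.image_erase hf, Finset.sum_image hf.injOn]
    exact Finset.sum_congr rfl fun g hg => hw g (Finset.mem_of_mem_erase hg)
  unfold TopOfSet
  rw [hsum, hf.mem_finset_image]
  exact and_congr_right fun he => by rw [hw e he]

namespace SimpleGraph

variable {α β : Type*} {A : SimpleGraph α} {B : SimpleGraph β}

lemma Walk.toFinset_edges_map [DecidableEq α] [DecidableEq β] (φ : A →g B) {a b : α}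
    (q : A.Walk a b) : (q.map φ).edges.toFinset = q.edges.toFinset.image (Sym2.map φ) := by
  ext e
  simp [Walk.edges_map]

lemma Walk.exists_map_eq_of_forall_mem_range (φ : A →g B) (hφ : Function.Injective φ)
    (hadj : ∀ a b, B.Adj (φ a) (φ b) → A.Adj a b) {a b : α} (r : B.Walk (φ a) (φ b))
    (hr : ∀ v ∈ r.support, v ∈ Set.range φ) : ∃ q : A.Walk a b, q.map φ = r := by
  suffices h : ∀ {x y : β} (r : B.Walk x y), (∀ v ∈ r.support, v ∈ Set.range φ) →
      ∀ (a b : α) (hx : x = φ a) (hy : y = φ b), ∃ q : A.Walk a b, q.map φ = r.copy hx hy by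
    simpa using h r hr a b rfl rfl
  intro x y r hr a b hx hy
  induction r generalizing a with
  | nil =>
    subst hx
    obtain rfl : a = b := hφ hy
    exact ⟨.nil, rfl⟩
  | @cons x z y h r ih =>
    subst hx hy
    obtain ⟨a', rfl⟩ := hr z (by simp)
    obtain ⟨q, hq⟩ := ih (fun v hv => hr v (by simp [hv])) a' rfl rfl
    exact ⟨.cons (hadj a a' h) q, by simpa using hq⟩

lemma Walk.IsCycle.exists_isPath_of_mem_support [DecidableEq α] {u z : α} {p : A.Walk u u}
    (hp : p.IsCycle) (hz : z ∈ p.support) :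
    ∃ (x y : α) (r : A.Walk x y), A.Adj x z ∧ A.Adj y z ∧ x ≠ y ∧ r.IsPath ∧
      z ∉ r.support ∧ (∀ v ∈ r.support, v ∈ p.support) ∧
      p.edges.toFinset = r.edges.toFinset ∪ {s(x, z), s(y, z)} := by
  have hrot : (p.rotate z hz).IsCycle := hp.rotate hz
  obtain ⟨x, y, hzx, hy, r, hq⟩ : ∃ (x y : α) (hzx : A.Adj z x) (hy : A.Adj y z)
      (r : A.Walk x y), p.rotate z hz = .cons hzx (r.concat hy) := by
    generalize p.rotate z hz = c at hrot
    cases c with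
    | nil => exact absurd rfl hrot.ne_nil
    | cons hzx q =>
      cases q with
      | nil => exact (A.irrefl hzx).elim
      | cons h q =>
        obtain ⟨y, r, hy, hr⟩ := Walk.exists_cons_eq_concat h q
        exact ⟨_, y, hzx, hy, r, by rw [hr]⟩
  rw [hq, Walk.cons_isCycle_iff, Walk.concat_isPath_iff] at hrot
  obtain ⟨⟨hr, hzr⟩, hzx_notMem⟩ := hrot
  have hedges : p.edges.toFinset = (p.rotate z hz).edges.toFinset :=
    List.toFinset_eq_of_perm _ _ (p.rotate_edges z hz).perm.symm
  refine ⟨x, y, r, hzx.symm, hy, fun hxy => hzx_notMem ?_, hr, hzr, fun v hv => ?_, ?_⟩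
  · subst hxy
    simp [Walk.edges_concat, Sym2.eq_swap]
  · rw [← Walk.mem_support_rotate_iff p z hz, hq]
    simp [Walk.support_concat, hv]
  · rw [hedges, hq]
    ext e
    simp [Walk.edges_concat, Sym2.eq_swap]

lemma Walk.IsPath.isCycleSet_insert_of_lt [DecidableEq V] {G : SimpleGraph V} {w : Sym2 V → ℝ}
    (hw : ∀ e ∈ G.edgeSet, 0 ≤ w e) {a b : V} {q : G.Walk a b} (hq : q.IsPath)
    (hab : G.Adj a b)
    (hlt : ∑ f ∈ q.edges.toFinset, w f < w s(a, b)) :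
    IsCycleSet G (insert s(a, b) q.edges.toFinset) ∧
      TopOfSet w (insert s(a, b) q.edges.toFinset) s(a, b) := by
  have hnotMem : s(a, b) ∉ q.edges.toFinset := Finset.notMem_of_sum_lt
    (fun f hf => hw f (q.edges_subset_edgeSet (List.mem_toFinset.mp hf))) hlt
  refine ⟨⟨b, .cons hab.symm q, ?_, ?_⟩, Finset.mem_insert_self _ _, ?_⟩
  · rw [Walk.cons_isCycle_iff, Sym2.eq_swap]
    exact ⟨hq, fun h => hnotMem (List.mem_toFinset.mpr h)⟩
  · simp [Sym2.eq_swap]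
  · rwa [Finset.erase_insert hnotMem]

end SimpleGraph

/-- The graph `G'` of the reduction: `Sum.inr (i, j)` is the new vertex `v_{ij}`. -/
def reductionGraph {ι : Type*} (G : SimpleGraph V) (st : ι → V × V) (J : Type*) :
    SimpleGraph (V ⊕ ι × J) :=
  SimpleGraph.fromEdgeSet
    ((Sym2.map Sum.inl '' G.edgeSet) ∪
      {e | ∃ (i : ι) (j : J), e = s(Sum.inl (st i).1, Sum.inr (i, j))} ∪
      {e | ∃ (i : ι) (j : J), e = s(Sum.inl (st i).2, Sum.inr (i, j))})

namespace reductionGraph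

variable {ι : Type*} {G : SimpleGraph V} {st : ι → V × V} {J : Type*}

lemma adj_inl_inl {a b : V} : (reductionGraph G st J).Adj (.inl a) (.inl b) ↔ G.Adj a b := by
  rw [reductionGraph, fromEdgeSet_adj, ← Sym2.map_mk]
  simp only [Set.mem_union, (Sym2.map.injective Sum.inl_injective).mem_set_image]
  simpa using G.ne_of_adj

lemma adj_inr {i : ι} {j : J} {x : V ⊕ ι × J}
    (h : (reductionGraph G st J).Adj (.inr (i, j)) x) :
    x = .inl (st i).1 ∨ x = .inl (st i).2 := by
  rw [reductionGraph, fromEdgeSet_adj] at h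
  obtain ⟨(⟨f, -, hf⟩ | ⟨i', j', hx⟩) | ⟨i', j', hx⟩, -⟩ := h
  · have := hf ▸ Sym2.mem_mk_left (Sum.inr (i, j)) x
    simp at this
  all_goals
    obtain ⟨⟨⟩, rfl⟩ | ⟨⟨⟩, rfl⟩ := Sym2.eq_iff.mp hx
    simp

lemma mem_edgeSet {e : Sym2 (V ⊕ ι × J)} (he : e ∈ (reductionGraph G st J).edgeSet) :
    (∃ f ∈ G.edgeSet, e = Sym2.map Sum.inl f) ∨
      ∃ i j, e = s(.inl (st i).1, .inr (i, j)) ∨ e = s(.inl (st i).2, .inr (i, j)) := by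
  rw [reductionGraph, edgeSet_fromEdgeSet] at he
  obtain ⟨(⟨f, hf, rfl⟩ | ⟨i, j, rfl⟩) | ⟨i, j, rfl⟩, -⟩ := he
  exacts [.inl ⟨f, hf, rfl⟩, .inr ⟨i, j, .inl rfl⟩, .inr ⟨i, j, .inr rfl⟩]

lemma weight_mem_Ioc {w : Sym2 V → ℝ} {w' : Sym2 (V ⊕ ι × J) → ℝ} {L : ℝ}
    (hw : ∀ e ∈ G.edgeSet, 0 < w e ∧ w e < L) (hst : ∀ i, G.Adj (st i).1 (st i).2)
    (hw'1 : ∀ e ∈ G.edgeSet, w' (Sym2.map Sum.inl e) = w e)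
    (hw'2 : ∀ i j, w' s(Sum.inl (st i).1, Sum.inr (i, j)) = L)
    (hw'3 : ∀ i j, w' s(Sum.inl (st i).2, Sum.inr (i, j)) = L - w s((st i).1, (st i).2)) :
    ∀ e ∈ (reductionGraph G st J).edgeSet, 0 < w' e ∧ w' e ≤ L := by
  intro e he
  rcases mem_edgeSet he with ⟨f, hf, rfl⟩ | ⟨i, j, rfl | rfl⟩
  · rw [hw'1 f hf]
    exact ⟨(hw f hf).1, (hw f hf).2.le⟩
  all_goals
    have := hw _ (G.mem_edgeSet.mpr (hst i))
    simp only [hw'2, hw'3]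
    constructor <;> linarith

variable (G st J) in
def inlHom : G →g reductionGraph G st J where
  toFun := Sum.inl
  map_rel' := adj_inl_inl.mpr

@[simp]
lemma coe_inlHom : ⇑(inlHom G st J) = Sum.inl := rfl

lemma exists_map_inlHom_eq {a b : V} (r : (reductionGraph G st J).Walk (.inl a) (.inl b))
    (hr : ∀ z, .inr z ∉ r.support) :
    ∃ q : G.Walk a b,
      r = (q.map (inlHom G st J)).copy (congrFun coe_inlHom a) (congrFun coe_inlHom b) := by
  obtain ⟨q, hq⟩ := Walk.exists_map_eq_of_forall_mem_range (inlHom G st J) Sum.inl_injective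
    (fun _ _ => adj_inl_inl.mp) r fun v hv => by
      cases v with
      | inl a => exact ⟨a, rfl⟩
      | inr z => exact absurd hv (hr z)
  exact ⟨q, hq.symm⟩

variable [DecidableEq V] [DecidableEq ι] [DecidableEq J]

lemma exists_path_of_inr_mem_support {u : V ⊕ ι × J} {p : (reductionGraph G st J).Walk u u}
    (hp : p.IsCycle) {i : ι} {j : J} (hz : .inr (i, j) ∈ p.support) :
    ∃ (a b : V) (r : (reductionGraph G st J).Walk (.inl a) (.inl b)),
      s(a, b) = s((st i).1, (st i).2) ∧ r.IsPath ∧ .inr (i, j) ∉ r.support ∧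
      (∀ v ∈ r.support, v ∈ p.support) ∧
      p.edges.toFinset = r.edges.toFinset ∪
        {s(.inl (st i).1, .inr (i, j)), s(.inl (st i).2, .inr (i, j))} := by
  obtain ⟨x, y, r, hx, hy, hxy, hr, hzr, hsupp, hedges⟩ := hp.exists_isPath_of_mem_support hz
  rcases adj_inr hx.symm with rfl | rfl <;> rcases adj_inr hy.symm with rfl | rfl
  · exact absurd rfl hxy
  · exact ⟨_, _, r, rfl, hr, hzr, hsupp, hedges⟩
  · exact ⟨_, _, r, Sym2.eq_swap, hr, hzr, hsupp, by rw [hedges, Finset.pair_comm]⟩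
  · exact absurd rfl hxy

variable {w : Sym2 V → ℝ} {w' : Sym2 (V ⊕ ι × J) → ℝ} {L : ℝ}

lemma exists_isCycleSet_of_forall_inl (hw'1 : ∀ e ∈ G.edgeSet, w' (Sym2.map Sum.inl e) = w e)
    {u : V ⊕ ι × J} {p : (reductionGraph G st J).Walk u u} (hp : p.IsCycle)
    (hnew : ∀ z, .inr z ∉ p.support) (hunb : UnbalancedSet w' p.edges.toFinset) :
    ∃ c : Finset (Sym2 V), IsCycleSet G c ∧ UnbalancedSet w c ∧
      p.edges.toFinset = c.image (Sym2.map Sum.inl) := by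
  obtain ⟨a, rfl⟩ : ∃ a, u = .inl a := by
    cases u with
    | inl a => exact ⟨a, rfl⟩
    | inr z => exact absurd p.start_mem_support (hnew z)
  obtain ⟨q, rfl⟩ := exists_map_inlHom_eq p hnew
  obtain ⟨e₀, htop⟩ := hunb
  rw [Walk.edges_copy, Walk.toFinset_edges_map, coe_inlHom] at htop ⊢
  obtain ⟨f, -, rfl⟩ := Finset.mem_image.mp htop.1
  have hq : q.IsCycle := by
    rwa [Walk.isCycle_copy, Walk.isCycle_map_iff_of_injective Sum.inl_injective] at hp
  refine ⟨q.edges.toFinset, ⟨a, q, hq, rfl⟩, ⟨f, ?_⟩, rfl⟩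
  refine (topOfSet_image_iff (Sym2.map.injective Sum.inl_injective) fun g hg => ?_).mp htop
  exact hw'1 g (q.edges_subset_edgeSet (List.mem_toFinset.mp hg))

lemma sum_edges_lt_of_topOfSet (hst : ∀ i, G.Adj (st i).1 (st i).2)
    (hw'1 : ∀ e ∈ G.edgeSet, w' (Sym2.map Sum.inl e) = w e)
    (hw'2 : ∀ i j, w' s(Sum.inl (st i).1, Sum.inr (i, j)) = L)
    (hw'3 : ∀ i j, w' s(Sum.inl (st i).2, Sum.inr (i, j)) = L - w s((st i).1, (st i).2))
    {i : ι} {j : J} {a b : V} {q : G.Walk a b}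
    (htop : TopOfSet w' (q.edges.toFinset.image (Sym2.map Sum.inl) ∪
      {s(.inl (st i).1, .inr (i, j)), s(.inl (st i).2, .inr (i, j))})
      s(.inl (st i).1, .inr (i, j))) :
    ∑ f ∈ q.edges.toFinset, w f < w s((st i).1, (st i).2) := by
  have hsum_image : ∑ f ∈ q.edges.toFinset.image (Sym2.map Sum.inl), w' f =
      ∑ f ∈ q.edges.toFinset, w f := by
    rw [Finset.sum_image (Sym2.map.injective Sum.inl_injective).injOn]
    exact Finset.sum_congr rfl fun f hf =>
      hw'1 f (q.edges_subset_edgeSet (List.mem_toFinset.mp hf))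
  have hdisj : Disjoint (q.edges.toFinset.image (Sym2.map Sum.inl))
      {s(.inl (st i).1, .inr (i, j)), s(.inl (st i).2, .inr (i, j))} := by
    simp only [Finset.disjoint_left, Finset.mem_image]
    rintro _ ⟨f, -, rfl⟩
    induction f using Sym2.ind
    simp
  have hne : s(Sum.inl (st i).1, Sum.inr (i, j)) ≠ s(.inl (st i).2, .inr (i, j)) := by
    simp [(hst i).ne]
  have hsum := Finset.add_sum_erase _ w' htop.1
  rw [Finset.sum_union hdisj, Finset.sum_pair hne, hsum_image, hw'2, hw'3] at hsum
  linarith [htop.2, hw'2 i j]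

section Weights

variable (hw' : ∀ e ∈ (reductionGraph G st J).edgeSet, 0 < w' e ∧ w' e ≤ L)
  (hw'2 : ∀ i j, w' s(Sum.inl (st i).1, Sum.inr (i, j)) = L)
include hw' hw'2

lemma top_eq_of_inr_mem_support {u : V ⊕ ι × J} {p : (reductionGraph G st J).Walk u u}
    (hp : p.IsCycle) {e₀ : Sym2 (V ⊕ ι × J)} (htop : TopOfSet w' p.edges.toFinset e₀)
    {i : ι} {j : J} (hz : .inr (i, j) ∈ p.support) : e₀ = s(.inl (st i).1, .inr (i, j)) := by
  obtain ⟨_, _, _, _, _, _, _, hedges⟩ := exists_path_of_inr_mem_support hp hz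
  have hc (e) (he : e ∈ p.edges.toFinset) : 0 < w' e ∧ w' e ≤ L :=
    hw' e (p.edges_subset_edgeSet (List.mem_toFinset.mp he))
  refine htop.eq_of_forall_le (fun e he => (hc e he).1.le) (by rw [hedges]; simp) fun e he => ?_
  rw [hw'2]
  exact (hc e he).2

lemma exists_isCycleSet_of_inr_mem_support (hw : ∀ e ∈ G.edgeSet, 0 ≤ w e)
    (hst : ∀ i, G.Adj (st i).1 (st i).2)
    (hw'1 : ∀ e ∈ G.edgeSet, w' (Sym2.map Sum.inl e) = w e)
    (hw'3 : ∀ i j, w' s(Sum.inl (st i).2, Sum.inr (i, j)) = L - w s((st i).1, (st i).2))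
    {u : V ⊕ ι × J} {p : (reductionGraph G st J).Walk u u} (hp : p.IsCycle)
    {e₀ : Sym2 (V ⊕ ι × J)} (htop : TopOfSet w' p.edges.toFinset e₀)
    {i : ι} {j : J} (hz : .inr (i, j) ∈ p.support) :
    ∃ c : Finset (Sym2 V), IsCycleSet G c ∧ TopOfSet w c s((st i).1, (st i).2) ∧
      p.edges.toFinset = (c.erase s((st i).1, (st i).2)).image (Sym2.map Sum.inl) ∪
        {s(.inl (st i).1, .inr (i, j)), s(.inl (st i).2, .inr (i, j))} := by
  have htop_eq (i' : ι) (j' : J) (hz' : .inr (i', j') ∈ p.support) :=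
    top_eq_of_inr_mem_support hw' hw'2 hp htop hz'
  obtain ⟨a, b, r, hab, hr, hzr, hsupp, hedges⟩ := exists_path_of_inr_mem_support hp hz
  have hinl : ∀ z, .inr z ∉ r.support := by
    rintro ⟨i', j'⟩ hz'
    have h := (htop_eq _ _ (hsupp _ hz')).symm.trans (htop_eq _ _ hz)
    obtain ⟨-, rfl, rfl⟩ : (st i').1 = (st i).1 ∧ i' = i ∧ j' = j := by simpa using h
    exact hzr hz'
  obtain ⟨q, rfl⟩ := exists_map_inlHom_eq r hinl
  rw [htop_eq _ _ hz, hedges, Walk.edges_copy, Walk.toFinset_edges_map, coe_inlHom] at htop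
  rw [hedges, Walk.edges_copy, Walk.toFinset_edges_map, coe_inlHom]
  have hlight : ∑ f ∈ q.edges.toFinset, w f < w s(a, b) :=
    hab ▸ sum_edges_lt_of_topOfSet hst hw'1 hw'2 hw'3 htop
  have hq : q.IsPath := by
    rwa [Walk.isPath_copy, Walk.isPath_map_iff_of_injective Sum.inl_injective] at hr
  have hab' : G.Adj a b := G.mem_edgeSet.mp (hab ▸ hst i)
  obtain ⟨hcyc, htop'⟩ := hq.isCycleSet_insert_of_lt hw hab' hlight
  rw [hab] at hcyc htop' hlight
  refine ⟨_, hcyc, htop', ?_⟩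
  rw [Finset.erase_insert (Finset.notMem_of_sum_lt (fun f hf => hw f
    (q.edges_subset_edgeSet (List.mem_toFinset.mp hf))) hlight)]

end Weights

end reductionGraph

theorem stmt12_general {ι : Type*} [DecidableEq ι] [Fintype V] [DecidableEq V]
    (G : SimpleGraph V) [DecidableRel G.Adj]
    (w : Sym2 V → ℝ) (hw : ∀ e ∈ G.edgeSet, 0 < w e)
    (st : ι → V × V)
    (hT1 : ∀ i : ι, ∃ c : Finset (Sym2 V),
      IsCycleSet G c ∧ TopOfSet w c s((st i).1, (st i).2))
    (L : ℝ) (hL : L = 1 + sSup (w '' G.edgeSet))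
    (G' : SimpleGraph (V ⊕ ι × Fin (G.edgeFinset.card + 1)))
    (hG' : G' = SimpleGraph.fromEdgeSet
      ((Sym2.map Sum.inl '' G.edgeSet) ∪
        {e | ∃ (i : ι) (j : Fin (G.edgeFinset.card + 1)),
          e = s(Sum.inl (st i).1, Sum.inr (i, j))} ∪
        {e | ∃ (i : ι) (j : Fin (G.edgeFinset.card + 1)),
          e = s(Sum.inl (st i).2, Sum.inr (i, j))}))
    (w' : Sym2 (V ⊕ ι × Fin (G.edgeFinset.card + 1)) → ℝ)
    (hw'1 : ∀ e ∈ G.edgeSet, w' (Sym2.map Sum.inl e) = w e)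
    (hw'2 : ∀ (i : ι) (j : Fin (G.edgeFinset.card + 1)),
      w' s(Sum.inl (st i).1, Sum.inr (i, j)) = L)
    (hw'3 : ∀ (i : ι) (j : Fin (G.edgeFinset.card + 1)),
      w' s(Sum.inl (st i).2, Sum.inr (i, j)) = L - w s((st i).1, (st i).2)) :
    ∀ c' : Finset (Sym2 (V ⊕ ι × Fin (G.edgeFinset.card + 1))),
      IsCycleSet G' c' → UnbalancedSet w' c' →
        (∃ c : Finset (Sym2 V), IsCycleSet G c ∧ UnbalancedSet w c ∧
          c' = c.image (Sym2.map Sum.inl)) ∨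
        (∃ (c : Finset (Sym2 V)) (i : ι) (j : Fin (G.edgeFinset.card + 1)),
          IsCycleSet G c ∧ UnbalancedSet w c ∧ TopOfSet w c s((st i).1, (st i).2) ∧
          c' = (c.erase s((st i).1, (st i).2)).image (Sym2.map Sum.inl) ∪
            {s(Sum.inl (st i).1, Sum.inr (i, j)), s(Sum.inl (st i).2, Sum.inr (i, j))}) := by
  subst hG'
  have hst (i : ι) : G.Adj (st i).1 (st i).2 := by
    obtain ⟨c, ⟨v, p, -, rfl⟩, htop⟩ := hT1 i
    exact p.adj_of_mem_edges (List.mem_toFinset.mp htop.1)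
  have hw_bounds (e) (he : e ∈ G.edgeSet) : 0 < w e ∧ w e < L := by
    have := le_csSup (G.edgeSet.toFinite.image w).bddAbove ⟨e, he, rfl⟩
    exact ⟨hw e he, by linarith⟩
  have hw' := reductionGraph.weight_mem_Ioc hw_bounds hst hw'1 hw'2 hw'3
  rintro c' ⟨u, p, hp, rfl⟩ ⟨e₀, htop⟩
  rcases em (∃ z, Sum.inr z ∈ p.support) with ⟨⟨i, j⟩, hz⟩ | hnew
  · obtain ⟨c, hc, htopc, hc'⟩ := reductionGraph.exists_isCycleSet_of_inr_mem_support hw' hw'2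
      (fun e he => (hw e he).le) hst hw'1 hw'3 hp htop hz
    exact .inr ⟨c, i, j, hc, ⟨_, htopc⟩, htopc, hc'⟩
  · exact .inl (reductionGraph.exists_isCycleSet_of_forall_inl hw'1 hp (not_exists.mp hnew)
      ⟨e₀, htop⟩)

/-- In the GMVID → GMVD reduction graph `G'`, every unbalanced cycle of `G'` is
either an unbalanced cycle of `G`, or is obtained from an unbalanced cycle `C`
of `G` with top edge `(sᵢ,tᵢ)` by replacing `(sᵢ,tᵢ)` with the pair of edges
`(sᵢ,v_{ij}), (tᵢ,v_{ij})` for some `j`. -/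
theorem stmt12 {ι : Type*} [DecidableEq ι] [Fintype V] [DecidableEq V]
    (G : SimpleGraph V) [DecidableRel G.Adj] (hconn : G.Connected)
    (w : Sym2 V → ℝ) (hw : ∀ e ∈ G.edgeSet, 0 < w e)
    (st : ι → V × V)
    (hT1 : ∀ i : ι, ∃ c : Finset (Sym2 V),
      IsCycleSet G c ∧ TopOfSet w c s((st i).1, (st i).2))
    (hT2 : ∀ (e : Sym2 V) (c : Finset (Sym2 V)), IsCycleSet G c → TopOfSet w c e →
      ∃ i : ι, e = s((st i).1, (st i).2))
    (L : ℝ) (hL : L = 1 + sSup (w '' G.edgeSet))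
    (G' : SimpleGraph (V ⊕ ι × Fin (G.edgeFinset.card + 1)))
    (hG' : G' = SimpleGraph.fromEdgeSet
      ((Sym2.map Sum.inl '' G.edgeSet) ∪
        {e | ∃ (i : ι) (j : Fin (G.edgeFinset.card + 1)),
          e = s(Sum.inl (st i).1, Sum.inr (i, j))} ∪
        {e | ∃ (i : ι) (j : Fin (G.edgeFinset.card + 1)),
          e = s(Sum.inl (st i).2, Sum.inr (i, j))}))
    (w' : Sym2 (V ⊕ ι × Fin (G.edgeFinset.card + 1)) → ℝ)
    (hw'1 : ∀ e ∈ G.edgeSet, w' (Sym2.map Sum.inl e) = w e)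
    (hw'2 : ∀ (i : ι) (j : Fin (G.edgeFinset.card + 1)),
      w' s(Sum.inl (st i).1, Sum.inr (i, j)) = L)
    (hw'3 : ∀ (i : ι) (j : Fin (G.edgeFinset.card + 1)),
      w' s(Sum.inl (st i).2, Sum.inr (i, j)) = L - w s((st i).1, (st i).2)) :
    ∀ c' : Finset (Sym2 (V ⊕ ι × Fin (G.edgeFinset.card + 1))),
      IsCycleSet G' c' → UnbalancedSet w' c' →
        (∃ c : Finset (Sym2 V), IsCycleSet G c ∧ UnbalancedSet w c ∧
          c' = c.image (Sym2.map Sum.inl)) ∨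
        (∃ (c : Finset (Sym2 V)) (i : ι) (j : Fin (G.edgeFinset.card + 1)),
          IsCycleSet G c ∧ UnbalancedSet w c ∧ TopOfSet w c s((st i).1, (st i).2) ∧
          c' = (c.erase s((st i).1, (st i).2)).image (Sym2.map Sum.inl) ∪
            {s(Sum.inl (st i).1, Sum.inr (i, j)), s(Sum.inl (st i).2, Sum.inr (i, j))}) :=
  stmt12_general G w hw st hT1 L hL G' hG' w' hw'1 hw'2 hw'3
end
end
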